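/- arXiv:1203.1389 — 5 statements merged into one kernel-verified Lean document; each statement's English description precedes it below -/
import Mathlib

section
/- Let $Z$ be a random walk on $\mathbb{Z}^d$ with i.i.d. increments of law $p$, with $n$-step distribution $p_n(x):=\mathbb{P}^Z_0(Z_n=x)$, where $p_0=\delta_0$ and by convention $p_{-1}\equiv 0$; write $p_{n,n+1}(x):=p_n(x)+p_{n+1}(x)$. Assume that (a) $p_{n,n+1}(0)\geq p_{n+1,n+2}(0)$ for all $n\geq -1$, and (b) $p_{n,n+1}(0)\geq p_{n,n+1}(x)$ for all $n\geq -1$ and all $x\in\mathbb{Z}^d$. Then for every deterministic sequence $\phi=(\phi_i)_{i\geq 0}$ in $\mathbb{Z}^d$ and every $n\in\mathbb{N}$, $\sum_{x\in\mathbb{Z}^d}\mathbb{P}^Z_x(\tilde\tau_\phi\leq n)\geq\sum_{x\in\mathbb{Z}^d}\mathbb{P}^Z_x(\tilde\tau_0\leq n)$, where $\tilde\tau_\phi:=\min\{m\geq 0: Z_m=\phi_m \text{ or } Z_m=\phi_{m+1}\}$ and $\tilde\tau_0$ is the case $\phi\equiv 0$. -/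
/-!
Let `a m` (resp. `b m`) be the mass of starting points `x` whose walk is first caught at time `m`
by the two-point trap `{φ m, φ (m + 1)}` (resp. by the trap at `0`), and let `r j = p_{j-1,j}(0)`.
By translation invariance `∑ₓ (Pₓ(Z_N = c) + Pₓ(Z_{N+1} = c)) = 2`. Taking `c = φ (N + 1)`,
decomposing according to the first catching time `m` and applying the Markov property at time `m`,
hypothesis (b) bounds the contribution of `m` by `a m * r (N + 1 - m)`; for the trap at `0` this is
an equality. Hence `∑_{m ≤ N+1} b m r (N+1-m) = 2 ≤ ∑_{m ≤ N+1} a m r (N+1-m)`, and since `r` is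
nonincreasing by (a) with `r 0 = 1`, Abel summation turns these convolution inequalities into
`∑_{m ≤ n} b m ≤ ∑_{m ≤ n} a m`.
-/

open MeasureTheory ProbabilityTheory Finset
open scoped ENNReal

lemma sum_range_nonneg_of_convolution_nonneg {c r : ℕ → ℝ} (hr0 : r 0 = 1) (hr : Antitone r)
    (h : ∀ N, 0 ≤ ∑ m ∈ range (N + 1), c m * r (N - m)) (n : ℕ) :
    0 ≤ ∑ m ∈ range (n + 1), c m := by
  induction n using Nat.strong_induction_on with
  | _ n ih =>
    -- Abel summation: the partial sum is the convolution plus the earlier partial sums weighted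
    -- by `r (n - i - 1) - r (n - i) ≥ 0`.
    have habel := sum_range_by_parts (fun i => r (n - i)) c (n + 1)
    simp only [smul_eq_mul, Nat.add_sub_cancel, Nat.sub_self, hr0, one_mul] at habel
    have hpos : 0 ≤ ∑ i ∈ range n, (r (n - (i + 1)) - r (n - i)) * ∑ j ∈ range (i + 1), c j :=
      sum_nonneg fun i hi => mul_nonneg (sub_nonneg.2 (hr (by omega))) (ih i (mem_range.1 hi))
    have hconv := h n
    simp only [mul_comm (c _)] at hconv
    linarith

lemma sum_range_le_sum_range_of_convolution_le {a b r : ℕ → ℝ≥0∞} (ha : ∀ m, a m ≠ ∞)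
    (hb : ∀ m, b m ≠ ∞) (hr_top : ∀ j, r j ≠ ∞) (hr0 : r 0 = 1) (hr : Antitone r)
    (h : ∀ N, ∑ m ∈ range (N + 1), b m * r (N - m) ≤ ∑ m ∈ range (N + 1), a m * r (N - m))
    (n : ℕ) : ∑ m ∈ range (n + 1), b m ≤ ∑ m ∈ range (n + 1), a m := by
  have hreal := sum_range_nonneg_of_convolution_nonneg (c := fun m => (a m).toReal - (b m).toReal)
    (r := fun j => (r j).toReal) (by simp [hr0])
    (fun i j hij => ENNReal.toReal_mono (hr_top i) (hr hij)) (fun N => by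
      have hN := ENNReal.toReal_mono (ENNReal.sum_ne_top.2 fun m _ =>
        ENNReal.mul_ne_top (ha m) (hr_top _)) (h N)
      simp only [ENNReal.toReal_sum fun m _ => ENNReal.mul_ne_top (ha m) (hr_top _),
        ENNReal.toReal_sum fun m _ => ENNReal.mul_ne_top (hb m) (hr_top _),
        ENNReal.toReal_mul] at hN
      simpa [sub_mul] using hN) n
  rw [← ENNReal.toReal_le_toReal (ENNReal.sum_ne_top.2 fun m _ => hb m)
    (ENNReal.sum_ne_top.2 fun m _ => ha m), ENNReal.toReal_sum fun m _ => hb m,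
    ENNReal.toReal_sum fun m _ => ha m]
  simpa using hreal

/-- `pairSum q j = q (j - 1) + q j` with the convention `q (-1) = 0`; for `q j = p_j(0)` this is
the paper's `p_{j-1,j}(0)`. -/
def pairSum (q : ℕ → ℝ≥0∞) : ℕ → ℝ≥0∞
  | 0 => q 0
  | j + 1 => q j + q (j + 1)

lemma pairSum_ne_top {q : ℕ → ℝ≥0∞} (hq : ∀ j, q j ≠ ∞) (j : ℕ) : pairSum q j ≠ ∞ := by
  cases j <;> simp [pairSum, hq]

lemma measure_eq_sum_disjointed_inter {Ω : Type*} [MeasurableSpace Ω] {μ : Measure Ω}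
    {f : ℕ → Set Ω} (hf : ∀ i, MeasurableSet (f i)) {W : Set Ω} (hW : MeasurableSet W) {n : ℕ}
    (hWf : ∀ ω ∈ W, ∃ i ≤ n, ω ∈ f i) :
    μ W = ∑ m ∈ range (n + 1), μ (disjointed f m ∩ W) := by
  have hcover : W = ⋃ m ∈ range (n + 1), disjointed f m ∩ W := by
    rw [← Set.iUnion₂_inter, biUnion_range_succ_disjointed, partialSups_eq_biSup]
    refine (Set.inter_eq_right.2 fun ω hω => ?_).symm
    obtain ⟨i, hi, hωi⟩ := hWf ω hω
    exact Set.mem_biUnion (Set.mem_Iic.2 hi) hωi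
  conv_lhs => rw [hcover]
  exact measure_biUnion_finset
    (fun i _ j _ hij => ((disjoint_disjointed f hij).mono Set.inter_subset_left
      Set.inter_subset_left))
    fun m _ => (MeasurableSet.disjointed hf m).inter hW

section Countable

variable {V Ω : Type*} [MeasurableSpace V] [MeasurableSingletonClass V] [Countable V]
  [MeasurableSpace Ω] {μ : Measure Ω}

lemma tsum_measure_inter_preimage_singleton {f : Ω → V} (hf : Measurable f) (A : Set Ω) :
    ∑' y, μ (A ∩ f ⁻¹' {y}) = μ A := by
  have h := tsum_measure_preimage_singleton (μ := μ.restrict A) (Set.countable_univ (α := V))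
    (f := f) fun y _ => hf (measurableSet_singleton y)
  rw [tsum_univ (fun y => μ.restrict A (f ⁻¹' {y}))] at h
  simpa [Measure.restrict_apply (hf (measurableSet_singleton _)), Set.inter_comm] using h

lemma tsum_measure_add_eq [AddCommGroup V] [IsProbabilityMeasure μ] {f : Ω → V}
    (hf : Measurable f) (c : V) : ∑' x, μ {ω | x + f ω = c} = 1 := by
  simp_rw [add_comm _ (f _), ← eq_sub_iff_add_eq]
  refine ((Equiv.subLeft c).tsum_eq (fun y => μ (f ⁻¹' {y}))).trans ?_
  simpa using tsum_measure_inter_preimage_singleton (μ := μ) hf Set.univ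

lemma identDistrib_of_measure_eq {f g : Ω → V} (hf : Measurable f) (hg : Measurable g)
    (h : ∀ x, μ {ω | f ω = x} = μ {ω | g ω = x}) : IdentDistrib f g μ μ where
  aemeasurable_fst := hf.aemeasurable
  aemeasurable_snd := hg.aemeasurable
  map_eq := Measure.ext_iff_singleton.2 fun x => by
    rw [Measure.map_apply hf (measurableSet_singleton x),
      Measure.map_apply hg (measurableSet_singleton x)]
    exact h x

end Countable

section Past

variable {Ω β : Type*} [MeasurableSpace β]

abbrev past (X : ℕ → Ω → β) (m : ℕ) : MeasurableSpace Ω :=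
  ⨆ i ∈ Set.Iio m, MeasurableSpace.comap (X i) inferInstance

lemma measurable_biSup_comap {X : ℕ → Ω → β} {S : Set ℕ} {i : ℕ} (hi : i ∈ S) :
    Measurable[⨆ j ∈ S, MeasurableSpace.comap (X j) inferInstance] (X i) :=
  Measurable.of_comap_le <|
    le_iSup₂ (f := fun j (_ : j ∈ S) => MeasurableSpace.comap (X j) inferInstance) i hi

lemma indep_past_future [MeasurableSpace Ω] {μ : Measure Ω} {X : ℕ → Ω → β}
    (hX : ∀ i, Measurable (X i)) (hindep : iIndepFun X μ) (m : ℕ) :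
    Indep (past X m) (⨆ i ∈ Set.Ici m, MeasurableSpace.comap (X i) inferInstance) μ :=
  indep_iSup_of_disjoint (fun i => (hX i).comap_le) ((iIndepFun_iff_iIndep _ _ _).1 hindep)
    (Set.Iio_disjoint_Ici le_rfl)

end Past

section Walk

variable {V Ω : Type*} [AddCommGroup V] {ξ : ℕ → Ω → V}

def walk (ξ : ℕ → Ω → V) (m : ℕ) (ω : Ω) : V := ∑ i ∈ range m, ξ i ω

def hitSet (ξ : ℕ → Ω → V) (T : ℕ → Set V) (x : V) (m : ℕ) : Set Ω :=
  {ω | x + walk ξ m ω ∈ T m}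

noncomputable def firstHitMass [MeasurableSpace Ω] (μ : Measure Ω) (ξ : ℕ → Ω → V)
    (T : ℕ → Set V) (m : ℕ) : ℝ≥0∞ :=
  ∑' x, μ (disjointed (hitSet ξ T x) m)

lemma pairSum_walk_zero [MeasurableSpace Ω] {μ : Measure Ω} [IsProbabilityMeasure μ] :
    pairSum (fun j => μ {ω | walk ξ j ω = 0}) 0 = 1 := by
  simp [pairSum, walk]

lemma tsum_sum_measure_disjointed_mul [MeasurableSpace Ω] {μ : Measure Ω} (T : ℕ → Set V)
    (g : ℕ → ℝ≥0∞) (s : Finset ℕ) :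
    ∑' x, ∑ m ∈ s, μ (disjointed (hitSet ξ T x) m) * g m = ∑ m ∈ s, firstHitMass μ ξ T m * g m := by
  rw [Summable.tsum_finsetSum fun _ _ => ENNReal.summable]
  simp_rw [ENNReal.tsum_mul_right]
  rfl

variable [MeasurableSpace V] [MeasurableSingletonClass V] [Countable V]

lemma measurable_past_walk {k m : ℕ} (hkm : k ≤ m) : Measurable[past ξ m] (walk ξ k) :=
  Finset.measurable_fun_sum _ fun _ hi =>
    measurable_biSup_comap (Set.mem_Iio.2 ((mem_range.1 hi).trans_le hkm))

lemma measurableSet_past_disjointed_hitSet (T : ℕ → Set V) (x : V) (m : ℕ) :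
    MeasurableSet[past ξ m] (disjointed (hitSet ξ T x) m) := by
  have hhit : ∀ k ≤ m, MeasurableSet[past ξ m] (hitSet ξ T x k) := fun k hkm =>
    (measurable_past_walk hkm).const_add x (Set.to_countable (T k)).measurableSet
  rw [disjointed_eq_inter_compl]
  exact (hhit m le_rfl).inter
    (MeasurableSet.iInter fun k => MeasurableSet.iInter fun hk => (hhit k hk.le).compl)

variable [MeasurableSpace Ω] {μ : Measure Ω}

lemma measurable_walk (hξ : ∀ i, Measurable (ξ i)) (m : ℕ) : Measurable (walk ξ m) :=
  Finset.measurable_fun_sum _ fun i _ => hξ i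

lemma measurableSet_hitSet (hξ : ∀ i, Measurable (ξ i)) (T : ℕ → Set V) (x : V) (m : ℕ) :
    MeasurableSet (hitSet ξ T x m) :=
  (measurable_walk hξ m).const_add x (Set.to_countable (T m)).measurableSet

lemma identDistrib_sum_Ico_walk (hindep : iIndepFun ξ μ)
    (hident : ∀ i, IdentDistrib (ξ i) (ξ 0) μ μ) (m k : ℕ) :
    IdentDistrib (fun ω => ∑ i ∈ Ico m (m + k), ξ i ω) (walk ξ k) μ μ := by
  have h := IdentDistrib.pi (X := fun i : Fin k => ξ (m + i)) (Y := fun i : Fin k => ξ i)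
    (fun i => (hident _).trans (hident _).symm)
    (hindep.precomp ((add_right_injective m).comp Fin.val_injective))
    (hindep.precomp Fin.val_injective)
  have hsum := h.comp (measurable_of_countable fun w : Fin k → V => ∑ i, w i)
  show IdentDistrib _ (fun ω => ∑ i ∈ range k, ξ i ω) μ μ
  simpa [Function.comp_def, sum_Ico_eq_sum_range, Finset.sum_range] using hsum

lemma measure_inter_walk_eq_mul (hξ : ∀ i, Measurable (ξ i)) (hindep : iIndepFun ξ μ)
    (hident : ∀ i, IdentDistrib (ξ i) (ξ 0) μ μ) {m N : ℕ} (hmN : m ≤ N) {A : Set Ω}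
    (hA : MeasurableSet[past ξ m] A) {x y : V} (hAy : A ⊆ {ω | x + walk ξ m ω = y}) (v : V) :
    μ (A ∩ {ω | x + walk ξ N ω = v}) = μ A * μ {ω | walk ξ (N - m) ω = v - y} := by
  obtain ⟨k, rfl⟩ := Nat.exists_eq_add_of_le hmN
  have hsplit : A ∩ {ω | x + walk ξ (m + k) ω = v}
      = A ∩ {ω | ∑ i ∈ Ico m (m + k), ξ i ω = v - y} := by
    ext ω
    simp only [Set.mem_inter_iff, Set.mem_ofPred_eq, and_congr_right_iff]
    intro hω
    rw [walk, ← sum_range_add_sum_Ico _ (Nat.le_add_right m k), ← add_assoc, ← walk, hAy hω,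
      eq_sub_iff_add_eq']
  have hfuture : MeasurableSet[⨆ i ∈ Set.Ici m, MeasurableSpace.comap (ξ i) inferInstance]
      {ω | ∑ i ∈ Ico m (m + k), ξ i ω = v - y} :=
    Finset.measurable_fun_sum _
      (fun _ hi => measurable_biSup_comap (Set.mem_Ici.2 (mem_Ico.1 hi).1))
      (measurableSet_singleton (v - y))
  rw [hsplit, (Indep_iff _ _ μ).1 (indep_past_future hξ hindep m) _ _ hA hfuture,
    Nat.add_sub_cancel_left]
  exact congrArg (μ A * ·)
    ((identDistrib_sum_Ico_walk hindep hident m k).measure_mem_eq (measurableSet_singleton _))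

lemma measure_inter_walk_eq_tsum (hξ : ∀ i, Measurable (ξ i)) (hindep : iIndepFun ξ μ)
    (hident : ∀ i, IdentDistrib (ξ i) (ξ 0) μ μ) {m N : ℕ} (hmN : m ≤ N) {A : Set Ω}
    (hA : MeasurableSet[past ξ m] A) (x v : V) :
    μ (A ∩ {ω | x + walk ξ N ω = v})
      = ∑' y, μ (A ∩ {ω | x + walk ξ m ω = y}) * μ {ω | walk ξ (N - m) ω = v - y} := by
  rw [← tsum_measure_inter_preimage_singleton ((measurable_walk hξ m).const_add x)]
  refine tsum_congr fun y => ?_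
  rw [Set.inter_right_comm]
  exact measure_inter_walk_eq_mul hξ hindep hident hmN
    (hA.inter ((measurable_past_walk le_rfl).const_add x (measurableSet_singleton y)))
    Set.inter_subset_right v

lemma measure_inter_walk_add_le (hξ : ∀ i, Measurable (ξ i)) (hindep : iIndepFun ξ μ)
    (hident : ∀ i, IdentDistrib (ξ i) (ξ 0) μ μ)
    (hB : ∀ j z, μ {ω | walk ξ j ω = z} + μ {ω | walk ξ (j + 1) ω = z}
      ≤ μ {ω | walk ξ j ω = 0} + μ {ω | walk ξ (j + 1) ω = 0})
    {m N : ℕ} (hmN : m ≤ N) {A : Set Ω} (hA : MeasurableSet[past ξ m] A) (x v : V) :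
    μ (A ∩ {ω | x + walk ξ N ω = v}) + μ (A ∩ {ω | x + walk ξ (N + 1) ω = v})
      ≤ μ A * pairSum (fun j => μ {ω | walk ξ j ω = 0}) (N + 1 - m) := by
  rw [measure_inter_walk_eq_tsum hξ hindep hident hmN hA,
    measure_inter_walk_eq_tsum hξ hindep hident (hmN.trans N.le_succ) hA,
    ← ENNReal.tsum_add, show N + 1 - m = N - m + 1 by omega, pairSum,
    ← tsum_measure_inter_preimage_singleton ((measurable_walk hξ m).const_add x) A,
    ← ENNReal.tsum_mul_right]
  exact ENNReal.tsum_le_tsum fun y => by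
    rw [← mul_add]
    exact mul_le_mul_right (hB (N - m) (v - y)) _

lemma tsum_measure_exists_hitSet (hξ : ∀ i, Measurable (ξ i)) (T : ℕ → Set V) (n : ℕ) :
    ∑' x, μ {ω | ∃ m ≤ n, ω ∈ hitSet ξ T x m}
      = ∑ m ∈ range (n + 1), firstHitMass μ ξ T m := by
  simp only [firstHitMass]
  rw [← Summable.tsum_finsetSum fun _ _ => ENNReal.summable]
  refine tsum_congr fun x => ?_
  have hW : MeasurableSet {ω | ∃ m ≤ n, ω ∈ hitSet ξ T x m} := by
    have h : {ω | ∃ m ≤ n, ω ∈ hitSet ξ T x m} = ⋃ m, ⋃ (_ : m ≤ n), hitSet ξ T x m := by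
      ext; simp
    exact h ▸ MeasurableSet.iUnion fun m => MeasurableSet.iUnion fun _ =>
      measurableSet_hitSet hξ T x m
  rw [measure_eq_sum_disjointed_inter (measurableSet_hitSet hξ T x) hW fun _ h => h]
  refine sum_congr rfl fun m hm => congrArg μ (Set.inter_eq_left.2 fun ω hω => ?_)
  exact ⟨m, Nat.lt_succ_iff.1 (mem_range.1 hm), disjointed_subset (hitSet ξ T x) m hω⟩

lemma firstHitMass_le_two [IsProbabilityMeasure μ] (hξ : ∀ i, Measurable (ξ i))
    {T : ℕ → Set V} {u v : ℕ → V} (hT : ∀ m, T m ⊆ {u m, v m}) (m : ℕ) :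
    firstHitMass μ ξ T m ≤ 2 := by
  calc firstHitMass μ ξ T m
      ≤ ∑' x, (μ {ω | x + walk ξ m ω = u m} + μ {ω | x + walk ξ m ω = v m}) :=
        ENNReal.tsum_le_tsum fun x => by
          have hsub : disjointed (hitSet ξ T x) m
              ⊆ {ω | x + walk ξ m ω = u m} ∪ {ω | x + walk ξ m ω = v m} := fun ω hω =>
            hT m (disjointed_subset (hitSet ξ T x) m hω)
          exact (measure_mono hsub).trans (measure_union_le _ _)
    _ = 2 := by
        rw [ENNReal.tsum_add, tsum_measure_add_eq (measurable_walk hξ m),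
          tsum_measure_add_eq (measurable_walk hξ m), one_add_one_eq_two]

lemma one_le_firstHitMass_zero [IsProbabilityMeasure μ] (hξ : ∀ i, Measurable (ξ i))
    {T : ℕ → Set V} {c : V} (hc : c ∈ T 0) : 1 ≤ firstHitMass μ ξ T 0 := by
  rw [← tsum_measure_add_eq (μ := μ) (measurable_walk hξ 0) c]
  refine ENNReal.tsum_le_tsum fun x => measure_mono fun ω hω => ?_
  have hω : x + walk ξ 0 ω = c := hω
  rw [disjointed_zero]
  exact (show x + walk ξ 0 ω ∈ T 0 by rw [hω]; exact hc)

lemma firstHitMass_const_zero [IsProbabilityMeasure μ] (hξ : ∀ i, Measurable (ξ i)) (c : V) :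
    firstHitMass μ ξ (fun _ => {c}) 0 = 1 := by
  simp only [firstHitMass, disjointed_zero]
  exact tsum_measure_add_eq (measurable_walk hξ 0) c

lemma measure_walk_pair_eq_sum (hξ : ∀ i, Measurable (ξ i)) {T : ℕ → Set V} {c : V} {N : ℕ}
    (hcN : c ∈ T N) (hcN' : c ∈ T (N + 1)) (x : V) :
    μ {ω | x + walk ξ N ω = c} + μ {ω | x + walk ξ (N + 1) ω = c}
      = ∑ m ∈ range (N + 1), (μ (disjointed (hitSet ξ T x) m ∩ {ω | x + walk ξ N ω = c})
          + μ (disjointed (hitSet ξ T x) m ∩ {ω | x + walk ξ (N + 1) ω = c}))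
        + μ (disjointed (hitSet ξ T x) (N + 1) ∩ {ω | x + walk ξ (N + 1) ω = c}) := by
  set F := disjointed (hitSet ξ T x)
  set W : ℕ → Set Ω := fun K => {ω | x + walk ξ K ω = c}
  have hW : ∀ K, MeasurableSet (W K) := fun K =>
    (measurable_walk hξ K).const_add x (measurableSet_singleton c)
  have hWN : W N ⊆ hitSet ξ T x N := fun ω hω => show x + walk ξ N ω ∈ T N by
    rw [show x + walk ξ N ω = c from hω]; exact hcN
  have hWN' : W (N + 1) ⊆ hitSet ξ T x (N + 1) := fun ω hω =>
    show x + walk ξ (N + 1) ω ∈ T (N + 1) by rw [show x + walk ξ (N + 1) ω = c from hω]; exact hcN'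
  have hcaught : F (N + 1) ∩ W N = ∅ := Set.disjoint_iff_inter_eq_empty.1 <|
    (disjoint_sdiff_self_left.mono_right (le_sup (mem_Iio.2 N.lt_succ_self))).mono_right hWN
  rw [measure_eq_sum_disjointed_inter (measurableSet_hitSet hξ T x) (hW N) (n := N + 1)
      fun ω hω => ⟨N, N.le_succ, hWN hω⟩,
    measure_eq_sum_disjointed_inter (measurableSet_hitSet hξ T x) (hW (N + 1)) (n := N + 1)
      fun ω hω => ⟨N + 1, le_rfl, hWN' hω⟩,
    sum_range_succ, sum_range_succ _ (N + 1), hcaught, measure_empty, add_zero, sum_add_distrib,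
    add_assoc]

lemma measure_walk_pair_le [IsProbabilityMeasure μ] (hξ : ∀ i, Measurable (ξ i))
    (hindep : iIndepFun ξ μ) (hident : ∀ i, IdentDistrib (ξ i) (ξ 0) μ μ)
    (hB : ∀ j z, μ {ω | walk ξ j ω = z} + μ {ω | walk ξ (j + 1) ω = z}
      ≤ μ {ω | walk ξ j ω = 0} + μ {ω | walk ξ (j + 1) ω = 0})
    {T : ℕ → Set V} {c : V} {N : ℕ} (hcN : c ∈ T N) (hcN' : c ∈ T (N + 1)) (x : V) :
    μ {ω | x + walk ξ N ω = c} + μ {ω | x + walk ξ (N + 1) ω = c}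
      ≤ ∑ m ∈ range (N + 2), μ (disjointed (hitSet ξ T x) m)
          * pairSum (fun j => μ {ω | walk ξ j ω = 0}) (N + 1 - m) := by
  rw [measure_walk_pair_eq_sum hξ hcN hcN' x, sum_range_succ _ (N + 1)]
  gcongr with m hm
  · exact measure_inter_walk_add_le hξ hindep hident hB (Nat.lt_succ_iff.1 (mem_range.1 hm))
      (measurableSet_past_disjointed_hitSet T x m) x c
  · rw [Nat.sub_self, pairSum_walk_zero, mul_one]
    exact measure_mono Set.inter_subset_left

lemma measure_walk_pair_eq_const [IsProbabilityMeasure μ] (hξ : ∀ i, Measurable (ξ i))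
    (hindep : iIndepFun ξ μ) (hident : ∀ i, IdentDistrib (ξ i) (ξ 0) μ μ) (c : V) (N : ℕ)
    (x : V) :
    μ {ω | x + walk ξ N ω = c} + μ {ω | x + walk ξ (N + 1) ω = c}
      = ∑ m ∈ range (N + 2), μ (disjointed (hitSet ξ (fun _ => {c}) x) m)
          * pairSum (fun j => μ {ω | walk ξ j ω = 0}) (N + 1 - m) := by
  rw [measure_walk_pair_eq_sum hξ (T := fun _ => {c}) rfl rfl x, sum_range_succ _ (N + 1)]
  congr 1
  · refine sum_congr rfl fun m hm => ?_
    have hmN : m ≤ N := Nat.lt_succ_iff.1 (mem_range.1 hm)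
    have hA := measurableSet_past_disjointed_hitSet (ξ := ξ) (fun _ => {c}) x m
    have hAc : disjointed (hitSet ξ (fun _ => {c}) x) m ⊆ {ω | x + walk ξ m ω = c} :=
      disjointed_subset _ m
    rw [measure_inter_walk_eq_mul hξ hindep hident hmN hA hAc,
      measure_inter_walk_eq_mul hξ hindep hident (hmN.trans N.le_succ) hA hAc, ← mul_add,
      sub_self, show N + 1 - m = N - m + 1 by omega, pairSum]
  · have hF : disjointed (hitSet ξ (fun _ => {c}) x) (N + 1) ⊆ {ω | x + walk ξ (N + 1) ω = c} :=
      disjointed_subset _ _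
    rw [Set.inter_eq_left.2 hF, Nat.sub_self, pairSum_walk_zero, mul_one]

lemma tsum_measure_walk_pair [IsProbabilityMeasure μ] (hξ : ∀ i, Measurable (ξ i)) (c : V)
    (N : ℕ) : ∑' x, (μ {ω | x + walk ξ N ω = c} + μ {ω | x + walk ξ (N + 1) ω = c}) = 2 := by
  rw [ENNReal.tsum_add, tsum_measure_add_eq (measurable_walk hξ N),
    tsum_measure_add_eq (measurable_walk hξ (N + 1)), one_add_one_eq_two]

lemma two_le_sum_firstHitMass_mul [IsProbabilityMeasure μ] (hξ : ∀ i, Measurable (ξ i))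
    (hindep : iIndepFun ξ μ) (hident : ∀ i, IdentDistrib (ξ i) (ξ 0) μ μ)
    (hB : ∀ j z, μ {ω | walk ξ j ω = z} + μ {ω | walk ξ (j + 1) ω = z}
      ≤ μ {ω | walk ξ j ω = 0} + μ {ω | walk ξ (j + 1) ω = 0})
    {T : ℕ → Set V} {c : V} {N : ℕ} (hcN : c ∈ T N) (hcN' : c ∈ T (N + 1)) :
    2 ≤ ∑ m ∈ range (N + 2),
      firstHitMass μ ξ T m * pairSum (fun j => μ {ω | walk ξ j ω = 0}) (N + 1 - m) := by
  rw [← tsum_measure_walk_pair (μ := μ) hξ c N, ← tsum_sum_measure_disjointed_mul]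
  exact ENNReal.tsum_le_tsum (measure_walk_pair_le hξ hindep hident hB hcN hcN')

lemma sum_firstHitMass_const_mul_eq_two [IsProbabilityMeasure μ] (hξ : ∀ i, Measurable (ξ i))
    (hindep : iIndepFun ξ μ) (hident : ∀ i, IdentDistrib (ξ i) (ξ 0) μ μ) (c : V) (N : ℕ) :
    ∑ m ∈ range (N + 2), firstHitMass μ ξ (fun _ => {c}) m
      * pairSum (fun j => μ {ω | walk ξ j ω = 0}) (N + 1 - m) = 2 := by
  rw [← tsum_measure_walk_pair (μ := μ) hξ c N, ← tsum_sum_measure_disjointed_mul]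
  exact (tsum_congr (measure_walk_pair_eq_const hξ hindep hident c N)).symm

lemma sum_firstHitMass_const_le [IsProbabilityMeasure μ] (hξ : ∀ i, Measurable (ξ i))
    (hindep : iIndepFun ξ μ) (hident : ∀ i, IdentDistrib (ξ i) (ξ 0) μ μ)
    (hA : Antitone (pairSum fun j => μ {ω | walk ξ j ω = 0}))
    (hB : ∀ j z, μ {ω | walk ξ j ω = z} + μ {ω | walk ξ (j + 1) ω = z}
      ≤ μ {ω | walk ξ j ω = 0} + μ {ω | walk ξ (j + 1) ω = 0})
    {T : ℕ → Set V} (hT : ∀ m, firstHitMass μ ξ T m ≠ ∞)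
    (hoverlap : ∀ N, ∃ c ∈ T N, c ∈ T (N + 1)) (c : V) (n : ℕ) :
    ∑ m ∈ range (n + 1), firstHitMass μ ξ (fun _ => {c}) m
      ≤ ∑ m ∈ range (n + 1), firstHitMass μ ξ T m := by
  refine sum_range_le_sum_range_of_convolution_le hT
    (fun m => ((firstHitMass_le_two hξ (u := fun _ => c) (v := fun _ => c) (fun _ => by simp)
      m).trans_lt (by norm_num)).ne)
    (pairSum_ne_top fun _ => measure_ne_top _ _) pairSum_walk_zero hA ?_ n
  rintro (_ | N)
  · obtain ⟨c₀, hc₀, -⟩ := hoverlap 0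
    simpa [pairSum_walk_zero] using
      (firstHitMass_const_zero hξ c).trans_le (one_le_firstHitMass_zero hξ hc₀)
  · obtain ⟨c', hcN, hcN'⟩ := hoverlap N
    rw [sum_firstHitMass_const_mul_eq_two hξ hindep hident]
    exact two_le_sum_firstHitMass_mul hξ hindep hident hB hcN hcN'

end Walk

theorem pascal_of_pn_monotone_general
    (d : ℕ)
    (p : (Fin d → ℤ) → ℝ≥0∞)
    {Ω : Type*} [MeasurableSpace Ω] (μ : Measure Ω) [IsProbabilityMeasure μ]
    (ξ : ℕ → Ω → (Fin d → ℤ))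
    (hmeas : ∀ i, Measurable (ξ i))
    (hindep : iIndepFun ξ μ)
    (hlaw : ∀ i (x : Fin d → ℤ), μ {ω | ξ i ω = x} = p x)
    (pn : ℕ → (Fin d → ℤ) → ℝ≥0∞)
    (hpn : ∀ m x, pn m x = μ {ω | ∑ i ∈ Finset.range m, ξ i ω = x})
    (hA' : pn 0 0 + pn 1 0 ≤ pn 0 0)
    (hA : ∀ m : ℕ, pn (m + 1) 0 + pn (m + 2) 0 ≤ pn m 0 + pn (m + 1) 0)
    (hB : ∀ (m : ℕ) (x : Fin d → ℤ), pn m x + pn (m + 1) x ≤ pn m 0 + pn (m + 1) 0)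
    (φ : ℕ → (Fin d → ℤ)) (n : ℕ) :
    ∑' x : Fin d → ℤ, μ {ω | ∃ m ≤ n, x + ∑ i ∈ Finset.range m, ξ i ω = 0} ≤
      ∑' x : Fin d → ℤ, μ {ω | ∃ m ≤ n,
        x + ∑ i ∈ Finset.range m, ξ i ω = φ m ∨
        x + ∑ i ∈ Finset.range m, ξ i ω = φ (m + 1)} := by
  have hident : ∀ i, IdentDistrib (ξ i) (ξ 0) μ μ := fun i =>
    identDistrib_of_measure_eq (hmeas i) (hmeas 0) fun x => by rw [hlaw, hlaw]
  have hwalk : ∀ j z, μ {ω | walk ξ j ω = z} = pn j z := fun j z => (hpn j z).symm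
  have hr : Antitone (pairSum fun j => μ {ω | walk ξ j ω = 0}) := antitone_nat_of_succ_le fun
    | 0 => by simpa [pairSum, hwalk] using hA'
    | j + 1 => by simpa [pairSum, hwalk] using hA j
  have hB_walk : ∀ j z, μ {ω | walk ξ j ω = z} + μ {ω | walk ξ (j + 1) ω = z}
      ≤ μ {ω | walk ξ j ω = 0} + μ {ω | walk ξ (j + 1) ω = 0} := by
    simpa only [hwalk] using hB
  let T : ℕ → Set (Fin d → ℤ) := fun m => {φ m, φ (m + 1)}
  have hT : ∀ m, firstHitMass μ ξ T m ≠ ∞ := fun m =>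
    ((firstHitMass_le_two hmeas (fun _ => subset_rfl) m).trans_lt (by norm_num)).ne
  calc _ = _ := tsum_measure_exists_hitSet hmeas _ n
    _ ≤ ∑ m ∈ range (n + 1), firstHitMass μ ξ T m :=
      sum_firstHitMass_const_le hmeas hindep hident hr hB_walk hT
        (fun N => ⟨φ (N + 1), Set.mem_insert_of_mem _ rfl, Set.mem_insert _ _⟩) 0 n
    _ = _ := (tsum_measure_exists_hitSet hmeas T n).symm

/-- **Pascal principle from monotonicity of `p_{n,n+1}(0)`.**  `Z` is a random walk on
`ℤ^d` with i.i.d. increments `ξ` of law `p`; `pn m x = P(ξ 0 + ⋯ + ξ (m-1) = x)` is its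
`m`-step distribution (`pn 0 = δ_0`), and by convention `p_{-1} ≡ 0`.  The hypotheses are
`p_{n,n+1}(0) ≥ p_{n+1,n+2}(0)` and `p_{n,n+1}(0) ≥ p_{n,n+1}(x)` for all `n ≥ -1`
(`hA'`, `hB'` are the `n = -1` cases, where `p_{-1,0} = p_0`).  The conclusion is the
discrete Pascal principle for the two-point trap field: summing over all starting points
`x`, the trap path `φ` catches at least as many walkers by time `n` as the constant trap
path `0`, where `τ̃_φ ≤ n` is the event `∃ m ≤ n, Z m = φ m ∨ Z m = φ (m+1)`. -/
theorem pascal_of_pn_monotone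
    (d : ℕ) (hd : 1 ≤ d)
    (p : (Fin d → ℤ) → ℝ≥0∞) (hsum : ∑' x : Fin d → ℤ, p x = 1)
    {Ω : Type*} [MeasurableSpace Ω] (μ : Measure Ω) [IsProbabilityMeasure μ]
    (ξ : ℕ → Ω → (Fin d → ℤ))
    (hmeas : ∀ i, Measurable (ξ i))
    (hindep : iIndepFun ξ μ)
    (hlaw : ∀ i (x : Fin d → ℤ), μ {ω | ξ i ω = x} = p x)
    (pn : ℕ → (Fin d → ℤ) → ℝ≥0∞)
    (hpn : ∀ m x, pn m x = μ {ω | ∑ i ∈ Finset.range m, ξ i ω = x})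
    (hA' : pn 0 0 + pn 1 0 ≤ pn 0 0)
    (hA : ∀ m : ℕ, pn (m + 1) 0 + pn (m + 2) 0 ≤ pn m 0 + pn (m + 1) 0)
    (hB' : ∀ x, pn 0 x ≤ pn 0 0)
    (hB : ∀ (m : ℕ) (x : Fin d → ℤ), pn m x + pn (m + 1) x ≤ pn m 0 + pn (m + 1) 0)
    (φ : ℕ → (Fin d → ℤ)) (n : ℕ) :
    ∑' x : Fin d → ℤ, μ {ω | ∃ m ≤ n, x + ∑ i ∈ Finset.range m, ξ i ω = 0} ≤
      ∑' x : Fin d → ℤ, μ {ω | ∃ m ≤ n,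
        x + ∑ i ∈ Finset.range m, ξ i ω = φ m ∨
        x + ∑ i ∈ Finset.range m, ξ i ω = φ (m + 1)} :=
  pascal_of_pn_monotone_general d p μ ξ hmeas hindep hlaw pn hpn hA' hA hB φ n
end

section
/- Let $Z$ be the simple symmetric random walk on $\mathbb{Z}^d$, $d\geq 1$, with $n$-step distribution $p_n(x):=\mathbb{P}^Z_0(Z_n=x)$. Then for all $n\geq 0$ and all $x\in\mathbb{Z}^d$: $p_n(x)+p_{n+1}(x)\leq p_n(0)+p_{n+1}(0)$. -/
/-!
`p_n` is the `n`-fold convolution power of the step law. A reflection argument shows that `p_n`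
does not increase under the moves `x ↦ x - e_i - e_j` (`i = j` allowed) inside the nonnegative
orthant, and sign symmetry brings every `x` into that orthant. Hence `p_n` is maximal at `0`
among the points of even coordinate sum, and at a unit vector `e` among those of odd sum. For
even `x` this bounds both terms. For odd `x`, `p_n(x) ≤ p_n(e) = p_{n+1}(0)`, and `p_{n+1}(x)`,
an average of `p_n` over points of even sum, is at most `p_n(0)`.
-/

open MeasureTheory ProbabilityTheory Finset
open scoped ENNReal

namespace RandomWalk

section Convolution

variable {G : Type*} [AddCommGroup G] {ν : G → ℝ≥0∞}

open scoped Classical in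
noncomputable def convPow (ν : G → ℝ≥0∞) : ℕ → G → ℝ≥0∞
  | 0 => fun x => if x = 0 then 1 else 0
  | n + 1 => fun x => ∑' y, ν y * convPow ν n (x - y)

theorem convPow_succ (n : ℕ) (x : G) :
    convPow ν (n + 1) x = ∑' y, ν y * convPow ν n (x - y) := rfl

theorem convPow_zero_of_ne_zero {x : G} (hx : x ≠ 0) : convPow ν 0 x = 0 := by
  simp [convPow, hx]

theorem convPow_map_addEquiv (e : G ≃+ G) (he : ∀ y, ν (e y) = ν y) (n : ℕ) (x : G) :
    convPow ν n (e x) = convPow ν n x := by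
  induction n generalizing x with
  | zero => classical exact if_congr e.map_eq_zero_iff rfl rfl
  | succ n ih =>
    rw [convPow_succ, convPow_succ, ← e.toEquiv.tsum_eq]
    refine tsum_congr fun y => ?_
    change ν (e y) * convPow ν n (e x - e y) = _
    rw [he, ← map_sub, ih]

/-- One step from `{h ≥ 0}` lands in `{h ≥ -1}`; on the layer `{h = -1}` the symmetry `R`
of `ν` acts as translation by `a`, so there `convPow ν n (z + a) = convPow ν n z`. -/
theorem convPow_add_le (R : G ≃+ G) (hR : ∀ y, ν (R y) = ν y) (h : G →+ ℤ) {a : G}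
    (ha : 0 < h a) (hRa : ∀ z, h z = -1 → R z = z + a) (hν : ∀ y, ν y ≠ 0 → h y ≤ 1)
    (n : ℕ) {x : G} (hx : 0 ≤ h x) : convPow ν n (x + a) ≤ convPow ν n x := by
  induction n generalizing x with
  | zero =>
    have : x + a ≠ 0 := fun h0 => by
      have := congrArg h h0
      rw [map_add, map_zero] at this
      omega
    simp [convPow_zero_of_ne_zero this]
  | succ n ih =>
    refine ENNReal.tsum_le_tsum fun y => ?_
    by_cases hy : ν y = 0
    · simp [hy]
    rw [show x + a - y = x - y + a by abel]
    gcongr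
    have hy1 := hν y hy
    have hxy : h (x - y) = h x - h y := map_sub h x y
    rcases (show 0 ≤ h (x - y) ∨ h (x - y) = -1 by omega) with hpos | hbd
    · exact ih hpos
    · rw [← hRa _ hbd, convPow_map_addEquiv R hR]

theorem convPow_succ_le (hν : ∑' y, ν y = 1) {n : ℕ} {x : G} {c : ℝ≥0∞}
    (h : ∀ y, ν y ≠ 0 → convPow ν n (x - y) ≤ c) : convPow ν (n + 1) x ≤ c := by
  calc convPow ν (n + 1) x ≤ ∑' y, ν y * c := ENNReal.tsum_le_tsum fun y => by
        by_cases hy : ν y = 0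
        · simp [hy]
        · gcongr; exact h y hy
    _ = c := by rw [ENNReal.tsum_mul_right, hν, one_mul]

theorem le_convPow_succ (hν : ∑' y, ν y = 1) {n : ℕ} {x : G} {c : ℝ≥0∞}
    (h : ∀ y, ν y ≠ 0 → c ≤ convPow ν n (x - y)) : c ≤ convPow ν (n + 1) x := by
  calc c = ∑' y, ν y * c := by rw [ENNReal.tsum_mul_right, hν, one_mul]
    _ ≤ convPow ν (n + 1) x := ENNReal.tsum_le_tsum fun y => by
        by_cases hy : ν y = 0
        · simp [hy]
        · gcongr; exact h y hy

end Convolution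

section Probability

variable {G : Type*} [MeasurableSpace G] [MeasurableSingletonClass G] [Countable G]
  {Ω : Type*} [MeasurableSpace Ω] {μ : Measure Ω} [IsProbabilityMeasure μ]
  {ν : G → ℝ≥0∞}

theorem tsum_eq_one_of_law {X : Ω → G} (hX : Measurable X)
    (hlaw : ∀ y, μ {ω | X ω = y} = ν y) : ∑' y, ν y = 1 := by
  have := tsum_measure_preimage_singleton (μ := μ) Set.countable_univ
    (fun y _ => hX (measurableSet_singleton y))
  rw [tsum_univ (f := fun y => μ (X ⁻¹' {y})), Set.preimage_univ, measure_univ] at this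
  rw [← this]
  exact tsum_congr fun y => (hlaw y).symm

theorem measure_sum_range_eq_convPow [AddCommGroup G] {ξ : ℕ → Ω → G}
    (hmeas : ∀ i, Measurable (ξ i)) (hindep : iIndepFun ξ μ)
    (hlaw : ∀ i y, μ {ω | ξ i ω = y} = ν y) (n : ℕ) (x : G) :
    μ {ω | ∑ i ∈ range n, ξ i ω = x} = convPow ν n x := by
  induction n generalizing x with
  | zero =>
    by_cases hx : x = 0
    · simp [convPow, hx]
    · simp [convPow, hx, Ne.symm hx]
  | succ n ih =>
    set S := ∑ i ∈ range n, ξ i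
    have hsplit :
        {ω | ∑ i ∈ range (n + 1), ξ i ω = x} = ⋃ y, S ⁻¹' {x - y} ∩ ξ n ⁻¹' {y} := by
      ext ω
      simp [S, sum_range_succ, eq_sub_iff_add_eq]
    have hdisj :
        Pairwise (Function.onFun Disjoint fun y => S ⁻¹' {x - y} ∩ ξ n ⁻¹' {y}) :=
      fun y y' hne => Disjoint.mono Set.inter_subset_right Set.inter_subset_right
        ((Set.disjoint_singleton.2 hne).preimage _)
    have hS : Measurable S := by fun_prop
    rw [hsplit, measure_iUnion hdisj fun _ => (hS (measurableSet_singleton _)).inter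
      (hmeas n (measurableSet_singleton _)), convPow_succ]
    refine tsum_congr fun y => ?_
    rw [(hindep.indepFun_sum_range_succ hmeas n).measure_inter_preimage_eq_mul _ _
      (measurableSet_singleton _) (measurableSet_singleton _), mul_comm, ← hlaw n y, ← ih]
    simp [Set.preimage, Finset.sum_apply]

end Probability

section SimpleRandomWalk

variable {d : ℕ}

noncomputable def srwStep (d : ℕ) (y : Fin d → ℤ) : ℝ≥0∞ :=
  if ∑ j, |y j| = 1 then (2 * d : ℝ≥0∞)⁻¹ else 0

def signedPerm (π : Equiv.Perm (Fin d)) (s : Fin d → ℤˣ) :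
    (Fin d → ℤ) ≃+ (Fin d → ℤ) where
  toFun z k := s k * z (π k)
  invFun z k := s (π.symm k) * z (π.symm k)
  left_inv z := by
    funext k
    simp [← mul_assoc, ← Units.val_mul, Int.units_mul_self]
  right_inv z := by
    funext k
    simp [← mul_assoc, ← Units.val_mul, Int.units_mul_self]
  map_add' _ _ := by
    funext k
    simp [mul_add]

@[simp]
theorem signedPerm_apply (π : Equiv.Perm (Fin d)) (s : Fin d → ℤˣ) (z : Fin d → ℤ)
    (k : Fin d) :
    signedPerm π s z k = s k * z (π k) := rfl

theorem srwStep_signedPerm (π : Equiv.Perm (Fin d)) (s : Fin d → ℤˣ) (y : Fin d → ℤ) :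
    srwStep d (signedPerm π s y) = srwStep d y := by
  have : ∑ k, |signedPerm π s y k| = ∑ k, |y k| := by
    simp only [signedPerm_apply, abs_mul, Int.abs_eq_natAbs (s _), Int.units_natAbs,
      Nat.cast_one, one_mul]
    exact Equiv.sum_comp π fun k => |y k|
  simp only [srwStep, this]

theorem sum_abs_eq_one_of_srwStep_ne_zero {y : Fin d → ℤ} (hy : srwStep d y ≠ 0) :
    ∑ k, |y k| = 1 := by
  by_contra h
  simp [srwStep, h] at hy

theorem le_one_of_srwStep_ne_zero {y : Fin d → ℤ} (hy : srwStep d y ≠ 0) (i : Fin d) :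
    y i ≤ 1 := by
  rw [← sum_abs_eq_one_of_srwStep_ne_zero hy]
  exact (le_abs_self _).trans (single_le_sum (fun k _ => abs_nonneg (y k)) (mem_univ i))

theorem add_le_one_of_srwStep_ne_zero {y : Fin d → ℤ} (hy : srwStep d y ≠ 0) {i j : Fin d}
    (hij : i ≠ j) : y i + y j ≤ 1 := by
  calc y i + y j ≤ ∑ k ∈ {i, j}, |y k| := by
        rw [sum_pair hij]; exact add_le_add (le_abs_self _) (le_abs_self _)
    _ ≤ ∑ k, |y k| := sum_le_sum_of_subset_of_nonneg (subset_univ _) fun k _ _ => abs_nonneg _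
    _ = 1 := sum_abs_eq_one_of_srwStep_ne_zero hy

theorem convPow_srwStep_add_single_two_le (n : ℕ) {x : Fin d → ℤ} {i : Fin d}
    (hx : 0 ≤ x i) :
    convPow (srwStep d) n (x + Pi.single i 2) ≤ convPow (srwStep d) n x := by
  have hR (z : Fin d → ℤ) (hz : z i = -1) :
      signedPerm 1 (Function.update 1 i (-1)) z = z + Pi.single i 2 := by
    funext k
    by_cases hk : k = i
    · subst hk; simp [hz]
    · simp [hk]
  exact convPow_add_le _ (srwStep_signedPerm _ _) (Pi.evalAddMonoidHom (fun _ => ℤ) i)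
    (by simp) hR (fun y hy => le_one_of_srwStep_ne_zero hy i) n hx

theorem convPow_srwStep_add_single_add_single_le_of_ne (n : ℕ) {x : Fin d → ℤ} {i j : Fin d}
    (hij : i ≠ j) (hx : 0 ≤ x i + x j) :
    convPow (srwStep d) n (x + (Pi.single i 1 + Pi.single j 1)) ≤ convPow (srwStep d) n x := by
  have hR (z : Fin d → ℤ) (hz : z i + z j = -1) :
      signedPerm (Equiv.swap i j) (Function.update (Function.update 1 i (-1)) j (-1)) z =
        z + (Pi.single i 1 + Pi.single j 1) := by
    funext k
    by_cases hki : k = i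
    · subst hki
      simp only [signedPerm_apply, Function.update_of_ne hij, Function.update_self,
        Equiv.swap_apply_left, Pi.add_apply, Pi.single_eq_same, Pi.single_eq_of_ne hij,
        Units.val_neg, Units.val_one]
      omega
    · by_cases hkj : k = j
      · subst hkj
        simp only [signedPerm_apply, Function.update_self, Equiv.swap_apply_right, Pi.add_apply,
          Pi.single_eq_same, Pi.single_eq_of_ne hki, Units.val_neg, Units.val_one]
        omega
      · simp [hki, hkj, Equiv.swap_apply_of_ne_of_ne]
  exact convPow_add_le _ (srwStep_signedPerm _ _)
    (Pi.evalAddMonoidHom (fun _ => ℤ) i + Pi.evalAddMonoidHom (fun _ => ℤ) j) (by simp [hij])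
    hR (fun y hy => add_le_one_of_srwStep_ne_zero hy hij) n hx

theorem convPow_srwStep_add_single_add_single_le (n : ℕ) {x : Fin d → ℤ} (i j : Fin d)
    (hx : 0 ≤ x i + x j) :
    convPow (srwStep d) n (x + Pi.single i 1 + Pi.single j 1) ≤ convPow (srwStep d) n x := by
  rw [add_assoc]
  obtain rfl | hij := eq_or_ne i j
  · rw [← Pi.single_add]
    exact convPow_srwStep_add_single_two_le n (by omega)
  · exact convPow_srwStep_add_single_add_single_le_of_ne n hij hx

theorem convPow_srwStep_abs (n : ℕ) (x : Fin d → ℤ) :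
    convPow (srwStep d) n |x| = convPow (srwStep d) n x := by
  have : |x| = signedPerm 1 (fun k => if x k < 0 then -1 else 1) x := by
    funext k
    by_cases h : x k < 0 <;> simp [h, abs_of_neg, abs_of_nonneg, not_lt.1]
  rw [this, convPow_map_addEquiv _ (srwStep_signedPerm _ _)]

theorem convPow_srwStep_single (n : ℕ) (i j : Fin d) :
    convPow (srwStep d) n (Pi.single i 1) = convPow (srwStep d) n (Pi.single j 1) := by
  have : Pi.single i 1 = signedPerm (Equiv.swap i j) 1 (Pi.single j 1) := by
    funext k
    simp [Pi.single_apply, Equiv.swap_apply_eq_iff]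
  rw [this, convPow_map_addEquiv _ (srwStep_signedPerm _ _)]

theorem exists_sub_single_nonneg {x : Fin d → ℤ} (hx : 0 ≤ x) (hs : 0 < ∑ k, x k) :
    ∃ i, 0 ≤ x - Pi.single i 1 ∧
      ∑ k, (x - Pi.single i 1 : Fin d → ℤ) k = ∑ k, x k - 1 := by
  obtain ⟨i, -, hi⟩ := exists_lt_of_sum_lt (f := 0) (g := x) (s := univ) (by simpa using hs)
  refine ⟨i, fun k => ?_, by simp [sum_sub_distrib]⟩
  by_cases hk : k = i
  · subst hk
    simp only [Pi.zero_apply, Pi.sub_apply, Pi.single_eq_same] at hi ⊢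
    omega
  · simpa [hk] using hx k

theorem exists_eq_single_of_nonneg_of_sum_eq_one {z : Fin d → ℤ} (hz : 0 ≤ z)
    (hs : ∑ k, z k = 1) : ∃ k, z = Pi.single k 1 := by
  obtain ⟨k, hk, hks⟩ := exists_sub_single_nonneg hz (by omega)
  exact ⟨k, sub_eq_zero.1 ((Fintype.sum_eq_zero_iff_of_nonneg hk).1 (by omega))⟩

theorem exists_convPow_srwStep_le_of_two_le {x : Fin d → ℤ} (hx : 0 ≤ x)
    (h2 : 2 ≤ ∑ k, x k) (n : ℕ) : ∃ z, 0 ≤ z ∧ ∑ k, z k = ∑ k, x k - 2 ∧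
      convPow (srwStep d) n x ≤ convPow (srwStep d) n z := by
  obtain ⟨i, hxi, hsi⟩ := exists_sub_single_nonneg hx (by omega)
  obtain ⟨j, hxj, hsj⟩ := exists_sub_single_nonneg hxi (by omega)
  refine ⟨_, hxj, by omega, ?_⟩
  convert convPow_srwStep_add_single_add_single_le n i j (add_nonneg (hxj i) (hxj j)) using 2
  abel

theorem exists_convPow_srwStep_le_of_sum_eq (n N : ℕ) {r : ℤ} (hr : 0 ≤ r) {x : Fin d → ℤ}
    (hx : 0 ≤ x) (hsum : ∑ k, x k = 2 * N + r) :
    ∃ z, 0 ≤ z ∧ ∑ k, z k = r ∧ convPow (srwStep d) n x ≤ convPow (srwStep d) n z := by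
  induction N generalizing x with
  | zero => exact ⟨x, hx, by simpa using hsum, le_rfl⟩
  | succ N ih =>
    obtain ⟨z, hz, hzs, hle⟩ := exists_convPow_srwStep_le_of_two_le hx (by omega) n
    obtain ⟨w, hw, hws, hle'⟩ := ih hz (by omega)
    exact ⟨w, hw, hws, hle.trans hle'⟩

theorem even_sum_abs_iff {ι : Type*} (s : Finset ι) (x : ι → ℤ) :
    Even (∑ k ∈ s, |x k|) ↔ Even (∑ k ∈ s, x k) := by
  rw [← Int.even_sub, ← sum_sub_distrib]
  exact even_sum _ fun k _ => Int.even_sub.2 even_abs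

theorem convPow_srwStep_le_zero (n : ℕ) {x : Fin d → ℤ} (hx : Even (∑ k, x k)) :
    convPow (srwStep d) n x ≤ convPow (srwStep d) n 0 := by
  obtain ⟨N, hN⟩ := (even_sum_abs_iff univ x).2 hx
  lift N to ℕ using (by have := sum_nonneg fun k (_ : k ∈ univ) => abs_nonneg (x k); omega)
  obtain ⟨z, hz, hzs, hle⟩ := exists_convPow_srwStep_le_of_sum_eq n N le_rfl (abs_nonneg x)
    (by simp only [Pi.abs_apply, hN]; ring)
  rwa [← convPow_srwStep_abs, ← (Fintype.sum_eq_zero_iff_of_nonneg hz).1 hzs]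

theorem convPow_srwStep_le_of_sum_abs_eq_one (n : ℕ) {x u : Fin d → ℤ} (hx : Odd (∑ k, x k))
    (hu : ∑ k, |u k| = 1) : convPow (srwStep d) n x ≤ convPow (srwStep d) n u := by
  obtain ⟨N, hN⟩ : Odd (∑ k, |x k|) := by
    rwa [← Int.not_even_iff_odd, even_sum_abs_iff, Int.not_even_iff_odd]
  lift N to ℕ using (by have := sum_nonneg fun k (_ : k ∈ univ) => abs_nonneg (x k); omega)
  obtain ⟨z, hz, hzs, hle⟩ := exists_convPow_srwStep_le_of_sum_eq n N zero_le_one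
    (abs_nonneg x) (by simpa only [Pi.abs_apply] using hN)
  obtain ⟨k, rfl⟩ := exists_eq_single_of_nonneg_of_sum_eq_one hz hzs
  obtain ⟨l, hl⟩ := exists_eq_single_of_nonneg_of_sum_eq_one (abs_nonneg u)
    (by simpa only [Pi.abs_apply] using hu)
  rwa [← convPow_srwStep_abs n x, ← convPow_srwStep_abs n u, hl, convPow_srwStep_single n l k]

theorem convPow_srwStep_add_succ_le (hν : ∑' y, srwStep d y = 1) (n : ℕ) (x : Fin d → ℤ) :
    convPow (srwStep d) n x + convPow (srwStep d) (n + 1) x ≤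
      convPow (srwStep d) n 0 + convPow (srwStep d) (n + 1) 0 := by
  rcases Int.even_or_odd (∑ k, x k) with he | ho
  · exact add_le_add (convPow_srwStep_le_zero n he) (convPow_srwStep_le_zero (n + 1) he)
  rw [add_comm (convPow (srwStep d) n 0)]
  refine add_le_add (le_convPow_succ hν fun y hy => ?_) (convPow_succ_le hν fun y hy => ?_)
  · have hy1 := sum_abs_eq_one_of_srwStep_ne_zero hy
    exact convPow_srwStep_le_of_sum_abs_eq_one n ho (by simpa using hy1)
  · have hy1 : Odd (∑ k, y k) := by
      rw [← Int.not_even_iff_odd, ← even_sum_abs_iff, sum_abs_eq_one_of_srwStep_ne_zero hy]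
      decide
    refine convPow_srwStep_le_zero n ?_
    simpa [sum_sub_distrib] using ho.sub_odd hy1

end SimpleRandomWalk

end RandomWalk

theorem srw_pn_sum_le_at_zero_general
    (d : ℕ)
    {Ω : Type*} [MeasurableSpace Ω] (μ : Measure Ω) [IsProbabilityMeasure μ]
    (ξ : ℕ → Ω → (Fin d → ℤ))
    (hmeas : ∀ i, Measurable (ξ i))
    (hindep : iIndepFun ξ μ)
    (hlaw : ∀ i (x : Fin d → ℤ),
      μ {ω | ξ i ω = x} = if (∑ j, |x j|) = 1 then ((2 * d : ℝ≥0∞))⁻¹ else 0)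
    (n : ℕ) (x : Fin d → ℤ) :
    μ {ω | ∑ i ∈ Finset.range n, ξ i ω = x} +
        μ {ω | ∑ i ∈ Finset.range (n + 1), ξ i ω = x} ≤
      μ {ω | ∑ i ∈ Finset.range n, ξ i ω = 0} +
        μ {ω | ∑ i ∈ Finset.range (n + 1), ξ i ω = 0} := by
  have hν : ∑' y, RandomWalk.srwStep d y = 1 :=
    RandomWalk.tsum_eq_one_of_law (hmeas 0) (hlaw 0)
  simp only [RandomWalk.measure_sum_range_eq_convPow (ν := RandomWalk.srwStep d) hmeas hindep
    hlaw]
  exact RandomWalk.convPow_srwStep_add_succ_le hν n x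

/-- For the simple symmetric random walk on `ℤ^d` (i.i.d. increments `ξ` uniform on the
`2d` unit vectors), with `p_m(x) = P(ξ 0 + ⋯ + ξ (m-1) = x)`, one has
`p_n(x) + p_{n+1}(x) ≤ p_n(0) + p_{n+1}(0)` for all `n ≥ 0` and `x ∈ ℤ^d`. -/
theorem srw_pn_sum_le_at_zero
    (d : ℕ) (hd : 1 ≤ d)
    {Ω : Type*} [MeasurableSpace Ω] (μ : Measure Ω) [IsProbabilityMeasure μ]
    (ξ : ℕ → Ω → (Fin d → ℤ))
    (hmeas : ∀ i, Measurable (ξ i))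
    (hindep : iIndepFun ξ μ)
    (hlaw : ∀ i (x : Fin d → ℤ),
      μ {ω | ξ i ω = x} = if (∑ j, |x j|) = 1 then ((2 * d : ℝ≥0∞))⁻¹ else 0)
    (n : ℕ) (x : Fin d → ℤ) :
    μ {ω | ∑ i ∈ Finset.range n, ξ i ω = x} +
        μ {ω | ∑ i ∈ Finset.range (n + 1), ξ i ω = x} ≤
      μ {ω | ∑ i ∈ Finset.range n, ξ i ω = 0} +
        μ {ω | ∑ i ∈ Finset.range (n + 1), ξ i ω = 0} :=
  srw_pn_sum_le_at_zero_general d μ ξ hmeas hindep hlaw n x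
end

section
/- Let $Z$ be the simple symmetric random walk on $\mathbb{Z}^d$, $d\geq 1$, with $n$-step distribution $p_n(x):=\mathbb{P}^Z_0(Z_n=x)$, and let $e_1=(1,0,\dots,0)$. Then for every odd $n\in\mathbb{N}$ and every $x=(x_1,\dots,x_d)\in\mathbb{Z}^d$ with $|x|_1:=\sum_{i=1}^d|x_i|$ odd, one has $p_n(x)\leq p_n(e_1)$. -/
/-!
A reflection principle without hitting times: let `z ↦ L z + c` be an affine involution whose
linear part permutes the step set and which fixes the level set `h = 0` of a function `h` that a
single step raises by at most one. If `h 0 ≤ 0 ≤ h x`, there are at least as many paths from `0`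
to the mirror image of `x` as to `x`. Induct on the length, peeling off first steps until the
starting point reaches `h = 0`, where the reflection is a symmetry of the walk.

The reflections in `zᵢ = xᵢ - 1` (when `xᵢ ≥ 2`) and in `zᵢ + zⱼ = 1` (when `xᵢ = xⱼ = 1`)
lower `|x|₁` by two, so after replacing `x` by `|x|` one descends to a unit vector, and all unit
vectors are equivalent under permutations of the coordinates.
-/

open MeasureTheory ProbabilityTheory Finset
open scoped ENNReal

section PathCount

variable {G : Type*} [AddCommGroup G] [DecidableEq G] {S : Finset G}

def pathCount (S : Finset G) : ℕ → G → ℕ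
  | 0, x => if x = 0 then 1 else 0
  | n + 1, x => ∑ a ∈ S, pathCount S n (x - a)

theorem pathCount_zero (x : G) : pathCount S 0 x = if x = 0 then 1 else 0 := rfl

theorem pathCount_succ (n : ℕ) (x : G) :
    pathCount S (n + 1) x = ∑ a ∈ S, pathCount S n (x - a) := rfl

theorem pathCount_map {L : G →+ G} (hL : Function.Involutive L) (hLS : ∀ a ∈ S, L a ∈ S)
    (n : ℕ) (x : G) : pathCount S n (L x) = pathCount S n x := by
  induction n generalizing x with
  | zero => simp only [pathCount_zero, hL.injective.eq_iff' (map_zero L)]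
  | succ n ih =>
    refine Finset.sum_nbij' L L hLS hLS (fun a _ => hL a) (fun a _ => hL a) fun a _ => ?_
    rw [← ih, map_sub, hL]

theorem pathCount_le_of_reflect {L : G →+ G} (hL : Function.Involutive L)
    (hLS : ∀ a ∈ S, L a ∈ S) (c : G) (h : G → ℤ) (hfix : ∀ z, h z = 0 → L z + c = z)
    (hstep : ∀ z, ∀ a ∈ S, h (z + a) ≤ h z + 1) {x : G} (h0 : h 0 ≤ 0) (hx : 0 ≤ h x)
    (n : ℕ) : pathCount S n x ≤ pathCount S n (L x + c) := by
  -- `pathCount S n (x - y)` counts the paths from `y` to `x`.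
  suffices ∀ n y, h y ≤ 0 → pathCount S n (x - y) ≤ pathCount S n (L x + c - y) by
    simpa using this n 0 h0
  intro n
  induction n with
  | zero =>
    intro y hy
    rw [pathCount_zero, pathCount_zero]
    split_ifs with hxy hfy <;> try simp
    rw [sub_eq_zero] at hxy
    subst hxy
    exact hfy (by rw [hfix x (by omega), sub_self])
  | succ n ih =>
    intro y hy
    rcases hy.lt_or_eq with hy | hy
    · refine Finset.sum_le_sum fun a ha => ?_
      simpa only [sub_sub] using ih (y + a) (by linarith [hstep y a ha])
    · refine le_of_eq ?_
      calc pathCount S (n + 1) (x - y) = pathCount S (n + 1) (L (x - y)) :=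
              (pathCount_map hL hLS _ _).symm
          _ = pathCount S (n + 1) (L x + c - y) := by
              conv_rhs => rw [← hfix y hy]
              rw [map_sub, add_sub_add_right_eq_sub]

end PathCount

section Lattice

variable {d : ℕ}

def unitVecs (d : ℕ) : Finset (Fin d → ℤ) :=
  (Fintype.piFinset fun _ => ({-1, 0, 1} : Finset ℤ)).filter fun a => ∑ j, |a j| = 1

theorem mem_unitVecs {a : Fin d → ℤ} : a ∈ unitVecs d ↔ ∑ j, |a j| = 1 := by
  simp only [unitVecs, mem_filter, Fintype.mem_piFinset, and_iff_right_iff_imp]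
  intro h j
  have : |a j| ≤ 1 := h ▸ single_le_sum (fun j _ => abs_nonneg (a j)) (mem_univ j)
  simp only [mem_insert, mem_singleton]
  have := abs_le.mp this
  omega

theorem abs_le_one_of_mem_unitVecs {a : Fin d → ℤ} (ha : a ∈ unitVecs d) (i : Fin d) :
    |a i| ≤ 1 :=
  mem_unitVecs.mp ha ▸ single_le_sum (fun k _ => abs_nonneg (a k)) (mem_univ i)

theorem abs_add_abs_le_one_of_mem_unitVecs {a : Fin d → ℤ} (ha : a ∈ unitVecs d) {i j : Fin d}
    (hij : i ≠ j) : |a i| + |a j| ≤ 1 :=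
  mem_unitVecs.mp ha ▸ add_le_sum (fun k _ => abs_nonneg (a k)) (mem_univ i) (mem_univ j) hij

def signedPerm (π : Equiv.Perm (Fin d)) (ε : Fin d → ℤ) : (Fin d → ℤ) →+ (Fin d → ℤ) where
  toFun z j := ε j * z (π j)
  map_zero' := by ext; simp
  map_add' z w := by ext; simp [mul_add]

@[simp]
theorem signedPerm_apply (π : Equiv.Perm (Fin d)) (ε z : Fin d → ℤ) (j : Fin d) :
    signedPerm π ε z j = ε j * z (π j) := rfl

section SignedPerm

variable {π : Equiv.Perm (Fin d)} {ε : Fin d → ℤ}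

theorem signedPerm_involutive (hπ : Function.Involutive π) (hε : ∀ j, ε j * ε (π j) = 1) :
    Function.Involutive (signedPerm π ε) := fun z => by
  ext j
  rw [signedPerm_apply, signedPerm_apply, hπ j, ← mul_assoc, hε j, one_mul]

theorem signedPerm_mem_unitVecs (hε : ∀ j, ε j * ε (π j) = 1) {a : Fin d → ℤ}
    (ha : a ∈ unitVecs d) : signedPerm π ε a ∈ unitVecs d := by
  have hε1 : ∀ j, |ε j| = 1 := fun j => by
    rcases Int.eq_one_or_neg_one_of_mul_eq_one (hε j) with h | h <;> simp [h]
  rw [mem_unitVecs] at ha ⊢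
  simp only [signedPerm_apply, abs_mul, hε1, one_mul]
  rwa [Equiv.sum_comp π fun j => |a j|]

theorem pathCount_signedPerm (hπ : Function.Involutive π) (hε : ∀ j, ε j * ε (π j) = 1)
    (n : ℕ) (x : Fin d → ℤ) :
    pathCount (unitVecs d) n (signedPerm π ε x) = pathCount (unitVecs d) n x :=
  pathCount_map (signedPerm_involutive hπ hε) (fun _ => signedPerm_mem_unitVecs hε) n x

end SignedPerm

theorem pathCount_abs (n : ℕ) (x : Fin d → ℤ) :
    pathCount (unitVecs d) n (fun j => |x j|) = pathCount (unitVecs d) n x := by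
  have hx : (fun j => |x j|) = signedPerm 1 (fun j => if 0 ≤ x j then 1 else -1) x := by
    ext j
    simp only [signedPerm_apply, Equiv.Perm.coe_one, id_eq]
    split_ifs with h
    · simp [abs_of_nonneg h]
    · simp [abs_of_neg (not_le.mp h)]
  rw [hx]
  exact pathCount_signedPerm (fun _ => rfl) (fun j => by by_cases h : 0 ≤ x j <;> simp [h]) n x

theorem pathCount_single_one (n : ℕ) (i i' : Fin d) :
    pathCount (unitVecs d) n (Pi.single i 1) = pathCount (unitVecs d) n (Pi.single i' 1) := by
  have h : Pi.single i 1 = signedPerm (Equiv.swap i i') 1 (Pi.single i' 1) := by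
    ext j
    simp [Pi.single_apply, Equiv.swap_apply_eq_iff]
  rw [h]
  exact pathCount_signedPerm (Equiv.swap_apply_self i i') (fun _ => rfl) n _

theorem pathCount_le_sub_single_two {x : Fin d → ℤ} {i : Fin d} (hi : 2 ≤ x i) (n : ℕ) :
    pathCount (unitVecs d) n x ≤ pathCount (unitVecs d) n (x - Pi.single i 2) := by
  set ε : Fin d → ℤ := fun j => if j = i then -1 else 1
  have hε : ∀ j, ε j * ε ((1 : Equiv.Perm (Fin d)) j) = 1 := fun j => by
    by_cases hj : j = i <;> simp [ε, hj]
  have hx : signedPerm 1 ε x + Pi.single i (2 * (x i - 1)) = x - Pi.single i 2 := by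
    ext j
    by_cases hj : j = i
    · subst hj; simp [ε]; ring
    · simp [ε, hj]
  rw [← hx]
  refine pathCount_le_of_reflect (signedPerm_involutive (fun _ => rfl) hε)
    (fun _ => signedPerm_mem_unitVecs hε) _ (fun z => z i - (x i - 1))
    (fun z hz => ?_) (fun z a ha => ?_) (by simp; omega) (by simp) n
  · ext j
    by_cases hj : j = i
    · subst hj; simp [ε]; omega
    · simp [ε, hj]
  · have := (abs_le.mp (abs_le_one_of_mem_unitVecs ha i)).2
    simp only [Pi.add_apply]
    omega

theorem pathCount_le_sub_single_sub_single {x : Fin d → ℤ} {i j : Fin d} (hij : i ≠ j)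
    (hi : x i = 1) (hj : x j = 1) (n : ℕ) :
    pathCount (unitVecs d) n x ≤
      pathCount (unitVecs d) n (x - Pi.single i 1 - Pi.single j 1) := by
  set ε : Fin d → ℤ := fun k => if k = i ∨ k = j then -1 else 1
  have hε : ∀ k, ε k * ε (Equiv.swap i j k) = 1 := fun k => by
    rcases eq_or_ne k i with rfl | hki
    · simp [ε]
    rcases eq_or_ne k j with rfl | hkj
    · simp [ε]
    · simp [ε, Equiv.swap_apply_of_ne_of_ne hki hkj, hki, hkj]
  have hx : signedPerm (Equiv.swap i j) ε x + (Pi.single i 1 + Pi.single j 1) =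
      x - Pi.single i 1 - Pi.single j 1 := by
    ext k
    rcases eq_or_ne k i with rfl | hki
    · simp [ε, hij, hi, hj]
    rcases eq_or_ne k j with rfl | hkj
    · simp [ε, hij, hi, hj]
    · simp [ε, Equiv.swap_apply_of_ne_of_ne hki hkj, hki, hkj]
  rw [← hx]
  refine pathCount_le_of_reflect (signedPerm_involutive (Equiv.swap_apply_self i j) hε)
    (fun _ => signedPerm_mem_unitVecs hε) _ (fun z => z i + z j - 1)
    (fun z hz => ?_) (fun z a ha => ?_) (by simp) (by simp [hi, hj]) n
  · ext k
    rcases eq_or_ne k i with rfl | hki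
    · simp [ε, hij]; omega
    rcases eq_or_ne k j with rfl | hkj
    · simp [ε, hij]; omega
    · simp [ε, Equiv.swap_apply_of_ne_of_ne hki hkj, hki, hkj]
  · have := abs_add_abs_le_one_of_mem_unitVecs ha hij
    have := le_abs_self (a i)
    have := le_abs_self (a j)
    simp only [Pi.add_apply]
    omega

theorem exists_eq_single_one_of_sum_eq_one {x : Fin d → ℤ} (hx0 : ∀ j, 0 ≤ x j)
    (hsum : ∑ j, x j = 1) : ∃ i, x = Pi.single i 1 := by
  obtain ⟨i, -, hi⟩ := exists_ne_zero_of_sum_ne_zero (hsum ▸ one_ne_zero : ∑ j, x j ≠ 0)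
  have hle := hsum ▸ single_le_sum (fun k _ => hx0 k) (mem_univ i)
  refine ⟨i, funext fun j => ?_⟩
  rcases eq_or_ne j i with rfl | hji
  · simp only [Pi.single_eq_same]
    have := hx0 j
    omega
  · have := hsum ▸ add_le_sum (fun k _ => hx0 k) (mem_univ i) (mem_univ j) (Ne.symm hji)
    have := hx0 j
    have := hx0 i
    simp only [Pi.single_eq_of_ne hji]
    omega

theorem exists_ne_eq_one_of_two_le_sum {x : Fin d → ℤ} (hx0 : ∀ j, 0 ≤ x j)
    (hx1 : ∀ j, x j ≤ 1) (hsum : 2 ≤ ∑ j, x j) :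
    ∃ i j, i ≠ j ∧ x i = 1 ∧ x j = 1 := by
  obtain ⟨i, -, hi⟩ := exists_ne_zero_of_sum_ne_zero (by omega : ∑ j, x j ≠ 0)
  have hrest := add_sum_erase univ x (mem_univ i)
  obtain ⟨j, hj, hj0⟩ :=
    exists_ne_zero_of_sum_ne_zero (by linarith [hx1 i] : ∑ j ∈ univ.erase i, x j ≠ 0)
  refine ⟨i, j, (ne_of_mem_erase hj).symm, ?_, ?_⟩
  · linarith [hx0 i, hx1 i, Int.one_le_abs hi, abs_of_nonneg (hx0 i)]
  · linarith [hx0 j, hx1 j, Int.one_le_abs hj0, abs_of_nonneg (hx0 j)]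

theorem pathCount_le_single_one_of_nonneg (n : ℕ) (i₀ : Fin d) (k : ℕ) {x : Fin d → ℤ}
    (hx0 : ∀ j, 0 ≤ x j) (hsum : ∑ j, x j = 2 * k + 1) :
    pathCount (unitVecs d) n x ≤ pathCount (unitVecs d) n (Pi.single i₀ 1) := by
  induction k generalizing x with
  | zero =>
    obtain ⟨i, rfl⟩ := exists_eq_single_one_of_sum_eq_one hx0 (by simpa using hsum)
    exact (pathCount_single_one n i i₀).le
  | succ k ih =>
    by_cases hbig : ∃ i, 2 ≤ x i
    · obtain ⟨i, hi⟩ := hbig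
      refine (pathCount_le_sub_single_two hi n).trans (ih (fun j => ?_) ?_)
      · rcases eq_or_ne j i with rfl | hji <;> simp [*]
      · simp only [Pi.sub_apply, sum_sub_distrib, sum_pi_single', mem_univ, if_true, hsum]
        push_cast; ring
    · push Not at hbig
      obtain ⟨i, j, hij, hi, hj⟩ := exists_ne_eq_one_of_two_le_sum hx0 (fun j => by
        linarith [hbig j]) (by omega)
      refine (pathCount_le_sub_single_sub_single hij hi hj n).trans (ih (fun l => ?_) ?_)
      · rcases eq_or_ne l i with rfl | hli
        · simp [hi, hij]
        rcases eq_or_ne l j with rfl | hlj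
        · simp [hj, hli]
        · simp [hli, hlj, hx0 l]
      · simp only [Pi.sub_apply, sum_sub_distrib, sum_pi_single', mem_univ, if_true, hsum]
        push_cast; ring

end Lattice

section Probability

variable {Ω G : Type*} [MeasurableSpace Ω] {μ : Measure Ω} [AddCommGroup G] [DecidableEq G]
  [Countable G] [MeasurableSpace G] [MeasurableSingletonClass G] [MeasurableAdd₂ G]

theorem measure_sum_range_eq_pathCount [IsProbabilityMeasure μ] {S : Finset G} {w : ℝ≥0∞}
    {ξ : ℕ → Ω → G} (hmeas : ∀ i, Measurable (ξ i)) (hindep : iIndepFun ξ μ)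
    (hlaw : ∀ i a, μ {ω | ξ i ω = a} = if a ∈ S then w else 0) (n : ℕ) (x : G) :
    μ {ω | ∑ i ∈ range n, ξ i ω = x} = w ^ n * pathCount S n x := by
  induction n generalizing x with
  | zero =>
    by_cases hx : x = 0
    · simp [hx, pathCount_zero]
    · simp [Ne.symm hx, pathCount_zero, hx]
  | succ n ih =>
    have hsum_meas : ∀ y, MeasurableSet {ω | ∑ i ∈ range n, ξ i ω = y} := fun y =>
      (Finset.measurable_sum _ fun i _ => hmeas i) (measurableSet_singleton y)
    have hsplit : {ω | ∑ i ∈ range (n + 1), ξ i ω = x} =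
        ⋃ a, {ω | ∑ i ∈ range n, ξ i ω = x - a} ∩ {ω | ξ n ω = a} := by
      ext ω
      simp [sum_range_succ, eq_sub_iff_add_eq]
    have hterm : ∀ a, μ ({ω | ∑ i ∈ range n, ξ i ω = x - a} ∩ {ω | ξ n ω = a}) =
        w ^ n * pathCount S n (x - a) * (if a ∈ S then w else 0) := fun a => by
      rw [← ih, ← hlaw n a]
      simpa [Set.preimage, Finset.sum_apply] using
        (hindep.indepFun_sum_range_succ hmeas n).measure_inter_preimage_eq_mul {x - a} {a}
          (measurableSet_singleton _) (measurableSet_singleton _)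
    have hdisj : Pairwise fun a b => Disjoint
        ({ω | ∑ i ∈ range n, ξ i ω = x - a} ∩ {ω | ξ n ω = a})
        ({ω | ∑ i ∈ range n, ξ i ω = x - b} ∩ {ω | ξ n ω = b}) :=
      fun a b hab => Set.disjoint_left.mpr fun ω ha hb => hab (ha.2.symm.trans hb.2)
    rw [hsplit,
      measure_iUnion hdisj fun a => (hsum_meas _).inter (hmeas n (measurableSet_singleton a)),
      tsum_congr hterm, tsum_eq_sum (s := S) fun a ha => by simp [ha], pathCount_succ, Nat.cast_sum,
      mul_sum]
    refine sum_congr rfl fun a ha => ?_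
    rw [if_pos ha, pow_succ]
    ring

end Probability

theorem srw_pn_odd_le_e1_general
    (d : ℕ)
    {Ω : Type*} [MeasurableSpace Ω] (μ : Measure Ω) [IsProbabilityMeasure μ]
    (ξ : ℕ → Ω → (Fin d → ℤ))
    (hmeas : ∀ i, Measurable (ξ i))
    (hindep : iIndepFun ξ μ)
    (hlaw : ∀ i (x : Fin d → ℤ),
      μ {ω | ξ i ω = x} = if (∑ j, |x j|) = 1 then ((2 * d : ℝ≥0∞))⁻¹ else 0)
    (n : ℕ)
    (x : Fin d → ℤ) (hx : Odd (∑ i, |x i|)) :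
    μ {ω | ∑ i ∈ Finset.range n, ξ i ω = x} ≤
      μ {ω | ∑ i ∈ Finset.range n, ξ i ω = fun j : Fin d => if (j : ℕ) = 0 then 1 else 0} := by
  have hlaw' : ∀ i a, μ {ω | ξ i ω = a} = if a ∈ unitVecs d then (2 * d : ℝ≥0∞)⁻¹ else 0 :=
    fun i a => by simpa only [mem_unitVecs] using hlaw i a
  obtain ⟨k, hk⟩ := hx
  have hd : 0 < d := Nat.pos_of_ne_zero (by rintro rfl; simp at hk; omega)
  lift k to ℕ using (by linarith [sum_nonneg fun j (_ : j ∈ univ) => abs_nonneg (x j)])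
  have he₁ : (fun j : Fin d => if (j : ℕ) = 0 then (1 : ℤ) else 0) = Pi.single ⟨0, hd⟩ 1 := by
    ext j
    simp [Pi.single_apply, Fin.ext_iff]
  rw [measure_sum_range_eq_pathCount hmeas hindep hlaw',
    measure_sum_range_eq_pathCount hmeas hindep hlaw', he₁]
  gcongr
  rw [← pathCount_abs]
  exact pathCount_le_single_one_of_nonneg n ⟨0, hd⟩ k (fun j => abs_nonneg _) hk

/-- For the simple symmetric random walk on `ℤ^d` (i.i.d. increments `ξ` uniform on the
`2d` unit vectors), with `p_n(x) = P(ξ 0 + ⋯ + ξ (n-1) = x)` and `e₁` the first standard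
basis vector: if `n` is odd and `|x|₁ = ∑ i |x i|` is odd, then `p_n(x) ≤ p_n(e₁)`. -/
theorem srw_pn_odd_le_e1
    (d : ℕ) (hd : 1 ≤ d)
    {Ω : Type*} [MeasurableSpace Ω] (μ : Measure Ω) [IsProbabilityMeasure μ]
    (ξ : ℕ → Ω → (Fin d → ℤ))
    (hmeas : ∀ i, Measurable (ξ i))
    (hindep : iIndepFun ξ μ)
    (hlaw : ∀ i (x : Fin d → ℤ),
      μ {ω | ξ i ω = x} = if (∑ j, |x j|) = 1 then ((2 * d : ℝ≥0∞))⁻¹ else 0)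
    (n : ℕ) (hn : Odd n)
    (x : Fin d → ℤ) (hx : Odd (∑ i, |x i|)) :
    μ {ω | ∑ i ∈ Finset.range n, ξ i ω = x} ≤
      μ {ω | ∑ i ∈ Finset.range n, ξ i ω = fun j : Fin d => if (j : ℕ) = 0 then 1 else 0} :=
  srw_pn_odd_le_e1_general d μ ξ hmeas hindep hlaw n x hx
end

section
/- Let $Z$ be a random walk on $\mathbb{Z}^d$ with i.i.d. increments of law $p$, with $n$-step distribution $p_n(x):=\mathbb{P}^Z_0(Z_n=x)$, $p_0=\delta_0$. Assume (a) $p_n(0)\geq p_{n+1}(0)$ for all $n\geq 0$, and (b) $p_n(0)\geq p_n(x)$ for all $n\geq 0$ and all $x\in\mathbb{Z}^d$. Then for every deterministic sequence $\phi=(\phi_i)_{i\geq 0}$ in $\mathbb{Z}^d$ and every $n\in\mathbb{N}$, $\sum_{x\in\mathbb{Z}^d}\mathbb{P}^Z_x(\tau_\phi\leq n)\geq\sum_{x\in\mathbb{Z}^d}\mathbb{P}^Z_x(\tau_0\leq n)$, where $\tau_\phi:=\min\{m\geq 0: Z_m=\phi_m\}$ and $\tau_0$ is the case $\phi\equiv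 0$. -/
open MeasureTheory ProbabilityTheory Finset Function
open scoped ENNReal

/-!
Split the event of being caught according to the first hitting time `τ`, and write
`F_ψ m = ∑ₓ ℙₓ(τ_ψ = m)` for a trap `ψ`. A walker started at `x` sits on the trap at time `N`
exactly when it first hit it at some `m ≤ N` and then moved by `ψ N - ψ m` in the `N - m`
remaining, independent steps; summing over `x` gives the renewal identity
`∑_{m ≤ N} F_ψ m * p_{N-m}(ψ N - ψ m) = 1`. By (b), `F_φ * q ≥ 1 = F_0 * q` for
`q k = p_k(0)`, and since `q` is nonincreasing with `q 0 = 1`, summation by parts turns this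
into `∑_{m ≤ n} F_0 m ≤ ∑_{m ≤ n} F_φ m`, which are the two sides of the theorem.
-/

section Renewal

variable {R : Type*} [CommSemiring R]

/-- Summation by parts against `q`, with the decrements `c k = q k - q (k + 1)` given as a
separate sequence so that no subtraction occurs. -/
theorem sum_range_mul_eq_conv_add_sum_mul {q c : ℕ → R} (hq : ∀ k, q k = q (k + 1) + c k)
    (w : ℕ → R) (N : ℕ) :
    (∑ m ∈ range (N + 1), w m) * q 0 =
      ∑ m ∈ range (N + 1), w m * q (N - m) + ∑ k ∈ range N, c k * ∑ m ∈ range (N - k), w m := by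
  have telescope : ∀ j, q 0 = q j + ∑ k ∈ range j, c k := by
    intro j
    induction j with
    | zero => simp
    | succ j ih => rw [ih, hq j, sum_range_succ]; ring
  have swap : ∑ m ∈ range (N + 1), w m * ∑ k ∈ range (N - m), c k =
      ∑ k ∈ range N, c k * ∑ m ∈ range (N - k), w m := by
    simp_rw [mul_sum, mul_comm (w _)]
    exact sum_comm' fun m k => by simp only [mem_range]; omega
  rw [sum_mul, ← swap, ← sum_add_distrib]
  refine sum_congr rfl fun m _ => ?_
  rw [telescope (N - m), mul_add]

variable [PartialOrder R] [CanonicallyOrderedAdd R] [IsOrderedRing R]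

theorem sum_range_le_of_conv_le {q u v : ℕ → R} (hq0 : q 0 = 1) (hq : ∀ k, q (k + 1) ≤ q k)
    (hconv : ∀ N, ∑ m ∈ range (N + 1), v m * q (N - m) ≤ ∑ m ∈ range (N + 1), u m * q (N - m))
    (N : ℕ) : ∑ m ∈ range (N + 1), v m ≤ ∑ m ∈ range (N + 1), u m := by
  choose c hc using fun k => exists_add_of_le (hq k)
  induction N using Nat.strong_induction_on with
  | _ N ih =>
    have key (w : ℕ → R) := by
      simpa only [hq0, mul_one] using sum_range_mul_eq_conv_add_sum_mul hc w N
    rw [key v, key u]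
    refine add_le_add (hconv N) (sum_le_sum fun k hk => ?_)
    obtain ⟨j, hj⟩ : ∃ j, N - k = j + 1 := ⟨N - k - 1, by simp only [mem_range] at hk; omega⟩
    rw [hj]
    exact mul_le_mul_of_nonneg_left (ih j (by omega)) zero_le

end Renewal

section FirstHit

variable {G : Type*} [AddCommGroup G] {Ω : Type*}

def firstHitAt (ξ : ℕ → Ω → G) (ψ : ℕ → G) (x : G) (m : ℕ) : Set Ω :=
  {ω | x + ∑ i ∈ range m, ξ i ω = ψ m ∧ ∀ k < m, x + ∑ i ∈ range k, ξ i ω ≠ ψ k}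

variable (ξ : ℕ → Ω → G) (ψ : ℕ → G) (x : G)

theorem pairwise_disjoint_firstHitAt : Pairwise (Disjoint on firstHitAt ξ ψ x) := by
  intro a b hab
  wlog h : a < b generalizing a b
  · exact (this hab.symm (hab.lt_or_gt.resolve_left h)).symm
  exact Set.disjoint_left.2 fun ω ha hb => hb.2 a h ha.1

theorem setOf_exists_hit_eq_biUnion_firstHitAt (n : ℕ) :
    {ω | ∃ m ≤ n, x + ∑ i ∈ range m, ξ i ω = ψ m} = ⋃ m ∈ range (n + 1), firstHitAt ξ ψ x m := by
  classical
  ext ω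
  simp only [Set.mem_ofPred_eq, Set.mem_iUnion, mem_range, Nat.lt_succ_iff, firstHitAt]
  constructor
  · rintro ⟨m, hmn, hm⟩
    have hex : ∃ k, x + ∑ i ∈ range k, ξ i ω = ψ k := ⟨m, hm⟩
    exact ⟨Nat.find hex, (Nat.find_le hm).trans hmn, Nat.find_spec hex,
      fun k hk => Nat.find_min hex hk⟩
  · rintro ⟨m, hmn, hm, -⟩
    exact ⟨m, hmn, hm⟩

theorem setOf_hit_eq_biUnion_firstHitAt_inter (N : ℕ) :
    {ω | x + ∑ i ∈ range N, ξ i ω = ψ N} =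
      ⋃ m ∈ range (N + 1), firstHitAt ξ ψ x m ∩ {ω | ∑ i ∈ Ico m N, ξ i ω = ψ N - ψ m} := by
  have restart : ∀ m ≤ N, ∀ ω ∈ firstHitAt ξ ψ x m,
      (x + ∑ i ∈ range N, ξ i ω = ψ N ↔ ∑ i ∈ Ico m N, ξ i ω = ψ N - ψ m) := by
    intro m hmN ω hω
    rw [← sum_range_add_sum_Ico _ hmN, ← add_assoc, hω.1, eq_sub_iff_add_eq', add_comm]
  ext ω
  simp only [Set.mem_iUnion, Set.mem_inter_iff, mem_range, Nat.lt_succ_iff]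
  constructor
  · intro h
    have hhit : ω ∈ {ω | ∃ m ≤ N, x + ∑ i ∈ range m, ξ i ω = ψ m} := ⟨N, le_rfl, h⟩
    simp only [setOf_exists_hit_eq_biUnion_firstHitAt, Set.mem_iUnion, mem_range,
      Nat.lt_succ_iff] at hhit
    obtain ⟨m, hmN, hm⟩ := hhit
    exact ⟨m, hmN, hm, (restart m hmN ω hm).1 h⟩
  · rintro ⟨m, hmN, hm, h⟩
    exact (restart m hmN ω hm).2 h

theorem measurableSet_firstHitAt [MeasurableSpace G] [MeasurableSingletonClass G]
    [MeasurableAdd₂ G] {mΩ : MeasurableSpace Ω} {m : ℕ} (hξ : ∀ i < m, Measurable (ξ i)) :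
    MeasurableSet (firstHitAt ξ ψ x m) := by
  have hwalk : ∀ k ≤ m, MeasurableSet {ω | x + ∑ i ∈ range k, ξ i ω = ψ k} := fun k hk =>
    (measurable_const.add (Finset.measurable_sum _ fun i hi =>
      hξ i ((mem_range.1 hi).trans_le hk))) (measurableSet_singleton _)
  simp only [firstHitAt, Set.ofPred_and, Set.ofPred_forall]
  exact (hwalk m le_rfl).inter (.iInter fun k => .iInter fun hk => (hwalk k hk.le).compl)

end FirstHit

section RandomWalk

variable {G : Type*} [AddCommGroup G] [MeasurableSpace G] [MeasurableSingletonClass G]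
  [Countable G] {Ω : Type*} [MeasurableSpace Ω] {μ : Measure Ω} {ξ : ℕ → Ω → G}

theorem tsum_measure_add_eq_one [IsProbabilityMeasure μ] {X : Ω → G} (hX : Measurable X) (c : G) :
    ∑' x, μ {ω | x + X ω = c} = 1 := by
  have hfiber : ∀ x, {ω | x + X ω = c} = X ⁻¹' {c - x} := fun x => by
    ext ω; simp [eq_sub_iff_add_eq']
  calc ∑' x, μ {ω | x + X ω = c} = ∑' y, μ (X ⁻¹' {y}) := by
        simp_rw [hfiber]; exact (Equiv.subLeft c).tsum_eq fun y => μ (X ⁻¹' {y})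
    _ = 1 := by
        rw [← tsum_univ, tsum_measure_preimage_singleton Set.countable_univ
          fun y _ => hX (measurableSet_singleton y), Set.preimage_univ, measure_univ]

theorem measure_sum_Ico_eq_measure_sum_range (hmeas : ∀ i, Measurable (ξ i))
    (hindep : iIndepFun ξ μ)
    (hident : ∀ i, μ.map (ξ i) = μ.map (ξ 0)) (m N : ℕ) (y : G) :
    μ {ω | ∑ i ∈ Ico m N, ξ i ω = y} = μ {ω | ∑ i ∈ range (N - m), ξ i ω = y} := by
  have hshift : Injective fun i : Fin (N - m) => m + (i : ℕ) := fun i j h => by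
    simpa [Fin.ext_iff] using h
  have hlaw : μ.map (fun ω (i : Fin (N - m)) => ξ (m + i) ω) =
      μ.map (fun ω (i : Fin (N - m)) => ξ i ω) := by
    rw [(hindep.precomp hshift).map_fun_eq_pi_map fun i => (hmeas _).aemeasurable,
      (hindep.precomp Fin.val_injective).map_fun_eq_pi_map fun i => (hmeas _).aemeasurable]
    simp only [hident]
  have hsum : MeasurableSet {t : Fin (N - m) → G | ∑ i, t i = y} := .of_discrete
  have hIco : {ω | ∑ i ∈ Ico m N, ξ i ω = y} =
      (fun ω (i : Fin (N - m)) => ξ (m + i) ω) ⁻¹' {t | ∑ i, t i = y} := by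
    ext ω
    simp [sum_Ico_eq_sum_range, Fin.sum_univ_eq_sum_range (fun i => ξ (m + i) ω)]
  have hrange : {ω | ∑ i ∈ range (N - m), ξ i ω = y} =
      (fun ω (i : Fin (N - m)) => ξ i ω) ⁻¹' {t | ∑ i, t i = y} := by
    ext ω
    simp [Fin.sum_univ_eq_sum_range (fun i => ξ i ω)]
  rw [hIco, hrange, ← Measure.map_apply (measurable_pi_lambda _ fun i => hmeas _) hsum, hlaw,
    Measure.map_apply (measurable_pi_lambda _ fun i => hmeas _) hsum]

theorem measure_firstHitAt_inter_eq_mul (hmeas : ∀ i, Measurable (ξ i)) (hindep : iIndepFun ξ μ)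
    (ψ : ℕ → G) (x : G) (m N : ℕ) (y : G) :
    μ (firstHitAt ξ ψ x m ∩ {ω | ∑ i ∈ Ico m N, ξ i ω = y}) =
      μ (firstHitAt ξ ψ x m) * μ {ω | ∑ i ∈ Ico m N, ξ i ω = y} := by
  have hsplit := indep_iSup_of_disjoint (fun i => (hmeas i).comap_le)
    ((iIndepFun_iff_iIndep _ _ _).1 hindep) (Set.Iio_disjoint_Ici (le_refl m))
  have hgen : ∀ {S : Set ℕ} {i}, i ∈ S →
      Measurable[⨆ j ∈ S, MeasurableSpace.comap (ξ j) inferInstance] (ξ i) := fun hi =>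
    .of_comap_le (le_iSup₂ (f := fun j _ => MeasurableSpace.comap (ξ j) inferInstance) _ hi)
  refine (Indep_iff _ _ μ).1 hsplit _ _ ?_ ?_
  · exact measurableSet_firstHitAt ξ ψ x fun i hi => hgen hi
  · exact Finset.measurable_sum _ (fun i hi => hgen (Set.mem_Ici.2 (mem_Ico.1 hi).1))
      (measurableSet_singleton y)

theorem measure_hit_eq_sum_firstHitAt_mul (hmeas : ∀ i, Measurable (ξ i)) (hindep : iIndepFun ξ μ)
    (hident : ∀ i, μ.map (ξ i) = μ.map (ξ 0)) (ψ : ℕ → G) (x : G) (N : ℕ) :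
    μ {ω | x + ∑ i ∈ range N, ξ i ω = ψ N} = ∑ m ∈ range (N + 1),
      μ (firstHitAt ξ ψ x m) * μ {ω | ∑ i ∈ range (N - m), ξ i ω = ψ N - ψ m} := by
  rw [setOf_hit_eq_biUnion_firstHitAt_inter, measure_biUnion_finset]
  · simp only [measure_firstHitAt_inter_eq_mul hmeas hindep,
      measure_sum_Ico_eq_measure_sum_range hmeas hindep hident]
  · exact fun a _ b _ hab => (pairwise_disjoint_firstHitAt ξ ψ x hab).mono
      Set.inter_subset_left Set.inter_subset_left
  · exact fun m _ => (measurableSet_firstHitAt ξ ψ x fun i _ => hmeas i).inter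
      (Finset.measurable_sum _ (fun i _ => hmeas i) (measurableSet_singleton _))

theorem sum_tsum_measure_firstHitAt_mul_eq_one [IsProbabilityMeasure μ]
    (hmeas : ∀ i, Measurable (ξ i)) (hindep : iIndepFun ξ μ)
    (hident : ∀ i, μ.map (ξ i) = μ.map (ξ 0)) (ψ : ℕ → G) (N : ℕ) :
    ∑ m ∈ range (N + 1), (∑' x, μ (firstHitAt ξ ψ x m)) *
      μ {ω | ∑ i ∈ range (N - m), ξ i ω = ψ N - ψ m} = 1 := by
  simp_rw [← ENNReal.tsum_mul_right]
  rw [← Summable.tsum_finsetSum fun _ _ => ENNReal.summable]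
  simp_rw [← measure_hit_eq_sum_firstHitAt_mul hmeas hindep hident]
  exact tsum_measure_add_eq_one (Finset.measurable_sum _ fun i _ => hmeas i) _

theorem tsum_measure_exists_hit_eq_sum (hmeas : ∀ i, Measurable (ξ i)) (ψ : ℕ → G) (n : ℕ) :
    ∑' x, μ {ω | ∃ m ≤ n, x + ∑ i ∈ range m, ξ i ω = ψ m} =
      ∑ m ∈ range (n + 1), ∑' x, μ (firstHitAt ξ ψ x m) := by
  rw [← Summable.tsum_finsetSum fun _ _ => ENNReal.summable]
  refine tsum_congr fun x => ?_
  rw [setOf_exists_hit_eq_biUnion_firstHitAt, measure_biUnion_finset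
    (fun a _ b _ hab => pairwise_disjoint_firstHitAt ξ ψ x hab)
    fun m _ => measurableSet_firstHitAt ξ ψ x fun i _ => hmeas i]

end RandomWalk

theorem moreau_pascal_general
    (d : ℕ)
    (p : (Fin d → ℤ) → ℝ≥0∞)
    {Ω : Type*} [MeasurableSpace Ω] (μ : Measure Ω) [IsProbabilityMeasure μ]
    (ξ : ℕ → Ω → (Fin d → ℤ))
    (hmeas : ∀ i, Measurable (ξ i))
    (hindep : iIndepFun ξ μ)
    (hlaw : ∀ i (x : Fin d → ℤ), μ {ω | ξ i ω = x} = p x)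
    (pn : ℕ → (Fin d → ℤ) → ℝ≥0∞)
    (hpn : ∀ m x, pn m x = μ {ω | ∑ i ∈ Finset.range m, ξ i ω = x})
    (hA : ∀ m : ℕ, pn (m + 1) 0 ≤ pn m 0)
    (hB : ∀ (m : ℕ) (x : Fin d → ℤ), pn m x ≤ pn m 0)
    (φ : ℕ → (Fin d → ℤ)) (n : ℕ) :
    ∑' x : Fin d → ℤ, μ {ω | ∃ m ≤ n, x + ∑ i ∈ Finset.range m, ξ i ω = 0} ≤
      ∑' x : Fin d → ℤ, μ {ω | ∃ m ≤ n, x + ∑ i ∈ Finset.range m, ξ i ω = φ m} := by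
  have hident : ∀ i, μ.map (ξ i) = μ.map (ξ 0) := fun i => Measure.ext_of_singleton fun x => by
    rw [Measure.map_apply (hmeas i) (measurableSet_singleton x),
      Measure.map_apply (hmeas 0) (measurableSet_singleton x)]
    exact (hlaw i x).trans (hlaw 0 x).symm
  have renewal := sum_tsum_measure_firstHitAt_mul_eq_one hmeas hindep hident
  rw [tsum_measure_exists_hit_eq_sum hmeas (fun _ => 0), tsum_measure_exists_hit_eq_sum hmeas φ]
  refine sum_range_le_of_conv_le (q := fun k => pn k 0) (by simp [hpn]) hA (fun N => ?_) n
  calc ∑ m ∈ range (N + 1), (∑' x, μ (firstHitAt ξ (fun _ => 0) x m)) * pn (N - m) 0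
      = 1 := by simpa [hpn] using renewal (fun _ => 0) N
    _ = ∑ m ∈ range (N + 1), (∑' x, μ (firstHitAt ξ φ x m)) * pn (N - m) (φ N - φ m) := by
        simpa [hpn] using (renewal φ N).symm
    _ ≤ ∑ m ∈ range (N + 1), (∑' x, μ (firstHitAt ξ φ x m)) * pn (N - m) 0 := by
        gcongr with m; exact hB _ _

/-- **Discrete-time Pascal principle of Moreau–Oshanin–Bénichou–Coppey.**  `Z` is a
random walk on `ℤ^d` with i.i.d. increments `ξ` of law `p`; `pn m x` is its `m`-step
distribution (`pn 0 = δ_0`).  Assume `pn n 0 ≥ pn (n+1) 0` and `pn n 0 ≥ pn n x` for all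
`n ≥ 0` and `x`.  Then, summing over all starting points `x`, the single moving trap `φ`
catches at least as many walkers by time `n` as the trap sitting at the origin, where
`τ_φ ≤ n` is the event `∃ m ≤ n, Z m = φ m`. -/
theorem moreau_pascal
    (d : ℕ) (hd : 1 ≤ d)
    (p : (Fin d → ℤ) → ℝ≥0∞) (hsum : ∑' x : Fin d → ℤ, p x = 1)
    {Ω : Type*} [MeasurableSpace Ω] (μ : Measure Ω) [IsProbabilityMeasure μ]
    (ξ : ℕ → Ω → (Fin d → ℤ))
    (hmeas : ∀ i, Measurable (ξ i))
    (hindep : iIndepFun ξ μ)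
    (hlaw : ∀ i (x : Fin d → ℤ), μ {ω | ξ i ω = x} = p x)
    (pn : ℕ → (Fin d → ℤ) → ℝ≥0∞)
    (hpn : ∀ m x, pn m x = μ {ω | ∑ i ∈ Finset.range m, ξ i ω = x})
    (hA : ∀ m : ℕ, pn (m + 1) 0 ≤ pn m 0)
    (hB : ∀ (m : ℕ) (x : Fin d → ℤ), pn m x ≤ pn m 0)
    (φ : ℕ → (Fin d → ℤ)) (n : ℕ) :
    ∑' x : Fin d → ℤ, μ {ω | ∃ m ≤ n, x + ∑ i ∈ Finset.range m, ξ i ω = 0} ≤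
      ∑' x : Fin d → ℤ, μ {ω | ∃ m ≤ n, x + ∑ i ∈ Finset.range m, ξ i ω = φ m} :=
  moreau_pascal_general d p μ ξ hmeas hindep hlaw pn hpn hA hB φ n
end

section
/- Let $Z=(Z_n)_{n\geq 0}$ be the simple symmetric random walk on $\mathbb{Z}$ started at $0$, and let $\phi=(\phi_n)_{n\geq 0}$ be the deterministic sequence with $\phi_n=0$ for even $n$ and $\phi_n=1$ for odd $n$. Then almost surely $\lim_{n\to\infty}\frac{|R_n(Z-\phi)|}{|R_n(Z)|}=\frac{1}{2}$, where $R_n(W):=\{W_i:0\leq i\leq n\}$ denotes the range of a path $W$ up to time $n$. In particular, the additive-perturbation inequality $\mathbb{E}[|R_n(Z-\phi)|]\geq\mathbb{E}[|R_n(Z)|]$ fails for the simple symmetric random walk for all large $n$. -/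
open MeasureTheory ProbabilityTheory Finset Filter Function
open scoped ENNReal

/-!
Write `z` for a path of the walk and `w i = z i - φ i`. Since `z i ≡ i (mod 2)`, we have
`w i = 2 ⌊z i / 2⌋`, so the range of `w` is the image of the range of `z` under `x ↦ 2 ⌊x / 2⌋`.
A nearest-neighbour path fills an integer interval, and halving an interval of `c` integers leaves
between `c / 2` and `c / 2 + 1` of them. Hence `|R_n(w)| / |R_n(z)| → 1/2` as soon as
`|R_n(z)| → ∞`, which holds almost surely since, by the second Borel–Cantelli lemma applied to
disjoint blocks of steps, the walk makes arbitrarily long runs of up-steps. The same counting gives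
`|R_n(w)| ≤ |R_n(z)|` for `n ≥ 1`, strictly when the first two steps go up, an event of
probability `1/4`.
-/

def oddIndicator (n : ℕ) : ℤ := if Even n then 0 else 1

def pathRange (z : ℕ → ℤ) (n : ℕ) : Finset ℤ := (range (n + 1)).image z

theorem Int.image_ediv_Icc {d : ℤ} (hd : 0 < d) {m M : ℤ} (h : m ≤ M) :
    (Icc m M).image (· / d) = Icc (m / d) (M / d) := by
  ext y
  simp only [mem_image, mem_Icc]
  constructor
  · rintro ⟨x, ⟨hmx, hxM⟩, rfl⟩
    exact ⟨Int.ediv_le_ediv hd hmx, Int.ediv_le_ediv hd hxM⟩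
  · rintro ⟨hmy, hyM⟩
    have hdy : d * y ≤ M :=
      (mul_le_mul_of_nonneg_left hyM hd.le).trans (Int.mul_ediv_self_le hd.ne')
    refine ⟨max m (d * y), ⟨le_max_left _ _, max_le h hdy⟩, ?_⟩
    rcases le_total m (d * y) with hle | hle
    · rw [max_eq_right hle, Int.mul_ediv_cancel_left _ hd.ne']
    · rw [max_eq_left hle]
      exact hmy.antisymm ((Int.mul_ediv_cancel_left _ hd.ne').symm.trans_le (Int.ediv_le_ediv hd hle))

section Path

variable {z : ℕ → ℤ}

theorem card_pathRange_le (z : ℕ → ℤ) (n : ℕ) : #(pathRange z n) ≤ n + 1 :=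
  card_image_le.trans (card_range _).le

theorem exists_pathRange_eq_Icc (hz : ∀ i, |z (i + 1) - z i| ≤ 1) (n : ℕ) :
    ∃ m M, m ≤ M ∧ pathRange z n = Icc m M := by
  induction n with
  | zero => exact ⟨z 0, z 0, le_rfl, by simp [pathRange]⟩
  | succ n ih =>
    obtain ⟨m, M, hmM, hn⟩ := ih
    have hzn : z n ∈ Icc m M := hn ▸ mem_image_of_mem z (self_mem_range_succ n)
    have hstep := abs_sub_le_iff.mp (hz n)
    refine ⟨min m (z (n + 1)), max M (z (n + 1)), by omega, ?_⟩
    rw [pathRange, range_add_one, image_insert, ← pathRange, hn]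
    ext x
    simp only [mem_insert, mem_Icc] at hzn ⊢
    omega

theorem sub_add_one_le_card_pathRange (hz : ∀ i, |z (i + 1) - z i| ≤ 1) {n a b : ℕ}
    (ha : a ≤ n) (hb : b ≤ n) : z b - z a + 1 ≤ #(pathRange z n) := by
  obtain ⟨m, M, -, hn⟩ := exists_pathRange_eq_Icc hz n
  have hmem : ∀ i ≤ n, z i ∈ Icc m M := fun i hi =>
    hn ▸ mem_image_of_mem z (mem_range_succ_iff.mpr hi)
  have hza := mem_Icc.mp (hmem a ha)
  have hzb := mem_Icc.mp (hmem b hb)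
  rw [hn, Int.card_Icc]
  omega

theorem tendsto_card_pathRange_atTop (hz : ∀ i, |z (i + 1) - z i| ≤ 1)
    (hrun : ∀ L, ∃ a, ∀ j < L, z (a + j + 1) - z (a + j) = 1) :
    Tendsto (fun n => #(pathRange z n)) atTop atTop := by
  refine tendsto_atTop_atTop.mpr fun L => ?_
  obtain ⟨a, ha⟩ := hrun L
  have hclimb : ∀ j ≤ L, z (a + j) = z a + j := by
    intro j hj
    induction j with
    | zero => simp
    | succ j ih =>
      have := ha j hj
      rw [← add_assoc]
      push_cast
      linarith [ih (by omega)]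
  refine ⟨a + L, fun n hn => ?_⟩
  have := sub_add_one_le_card_pathRange hz (a := a) (b := a + L) (by omega) hn
  rw [hclimb L le_rfl] at this
  omega

theorem sub_oddIndicator_eq_two_mul_ediv_two (h0 : z 0 = 0) (hz : ∀ i, |z (i + 1) - z i| = 1)
    (i : ℕ) : z i - oddIndicator i = 2 * (z i / 2) := by
  have hpar : ∀ i : ℕ, z i % 2 = (i : ℤ) % 2 := by
    intro i
    induction i with
    | zero => simp [h0]
    | succ i ih =>
      rcases (abs_eq zero_le_one).mp (hz i) with h | h <;> push_cast <;> omega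
  have := hpar i
  rcases Nat.even_or_odd i with h | h
  · have := Nat.even_iff.mp h
    rw [oddIndicator, if_pos h]
    omega
  · have := Nat.odd_iff.mp h
    rw [oddIndicator, if_neg (Nat.not_even_iff_odd.mpr h)]
    omega

theorem card_pathRange_sub_oddIndicator (h0 : z 0 = 0) (hz : ∀ i, |z (i + 1) - z i| = 1)
    (n : ℕ) :
    #(pathRange (fun i => z i - oddIndicator i) n) = #((pathRange z n).image (· / 2)) := by
  have : pathRange (fun i => z i - oddIndicator i) n
      = ((pathRange z n).image (· / 2)).image (2 * ·) := by
    simp only [pathRange, image_image]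
    exact image_congr fun i _ => sub_oddIndicator_eq_two_mul_ediv_two h0 hz i
  rw [this, card_image_of_injective _ (mul_right_injective₀ two_ne_zero)]

theorem card_pathRange_sub_oddIndicator_bounds (h0 : z 0 = 0)
    (hz : ∀ i, |z (i + 1) - z i| = 1) (n : ℕ) :
    #(pathRange z n) ≤ 2 * #(pathRange (fun i => z i - oddIndicator i) n) ∧
      2 * #(pathRange (fun i => z i - oddIndicator i) n) ≤ #(pathRange z n) + 2 := by
  obtain ⟨m, M, hmM, hn⟩ := exists_pathRange_eq_Icc (fun i => (hz i).le) n
  rw [card_pathRange_sub_oddIndicator h0 hz, hn, Int.image_ediv_Icc two_pos hmM, Int.card_Icc,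
    Int.card_Icc]
  omega

theorem card_pathRange_sub_oddIndicator_le (h0 : z 0 = 0) (hz : ∀ i, |z (i + 1) - z i| = 1)
    {n : ℕ} (hn : 1 ≤ n) :
    #(pathRange (fun i => z i - oddIndicator i) n) ≤ #(pathRange z n) := by
  have h01 := sub_add_one_le_card_pathRange (fun i => (hz i).le) (a := 0) (b := 1) (by omega) hn
  have h10 := sub_add_one_le_card_pathRange (fun i => (hz i).le) (a := 1) (b := 0) hn (by omega)
  have := (card_pathRange_sub_oddIndicator_bounds h0 hz n).2
  rcases (abs_eq zero_le_one).mp (hz 0) with h | h <;> omega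

theorem card_pathRange_sub_oddIndicator_lt (h0 : z 0 = 0) (hz : ∀ i, |z (i + 1) - z i| = 1)
    (h2 : z 2 = 2) {n : ℕ} (hn : 2 ≤ n) :
    #(pathRange (fun i => z i - oddIndicator i) n) < #(pathRange z n) := by
  have h02 := sub_add_one_le_card_pathRange (fun i => (hz i).le) (a := 0) (b := 2) (by omega) hn
  have := (card_pathRange_sub_oddIndicator_bounds h0 hz n).2
  omega

end Path

theorem tendsto_div_of_le_two_mul_le_add_two {a b : ℕ → ℕ} (hb : Tendsto b atTop atTop)
    (hle : ∀ n, b n ≤ 2 * a n) (hge : ∀ n, 2 * a n ≤ b n + 2) :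
    Tendsto (fun n => (a n : ℝ) / b n) atTop (nhds (1 / 2)) := by
  have hb' : Tendsto (fun n => (b n : ℝ)) atTop atTop := tendsto_natCast_atTop_atTop.comp hb
  have hupper : Tendsto (fun n => 1 / 2 + (b n : ℝ)⁻¹) atTop (nhds (1 / 2)) := by
    simpa using tendsto_const_nhds.add hb'.inv_tendsto_atTop
  refine tendsto_of_tendsto_of_tendsto_of_le_of_le' tendsto_const_nhds hupper ?_ ?_ <;>
    filter_upwards [hb.eventually_ge_atTop 1] with n hn <;>
    have hpos : (0 : ℝ) < b n := by exact_mod_cast hn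
  · have : (b n : ℝ) ≤ 2 * a n := by exact_mod_cast hle n
    rw [le_div_iff₀ hpos]
    linarith
  · have : 2 * (a n : ℝ) ≤ b n + 2 := by exact_mod_cast hge n
    rw [div_le_iff₀ hpos, add_mul, inv_mul_cancel₀ hpos.ne']
    linarith

section Probability

variable {Ω : Type*} [MeasurableSpace Ω] {μ : Measure Ω}

theorem ae_of_forall_measure_eq_zero {β : Type*} [Countable β] {X : Ω → β} {p : β → Prop}
    (h : ∀ k, ¬p k → μ {ω | X ω = k} = 0) : ∀ᵐ ω ∂μ, p (X ω) := by
  refine ae_iff.mpr (measure_mono_null ?_ ((measure_biUnion_null_iff (Set.to_countable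
    {k | ¬p k})).mpr h))
  intro ω hω
  exact Set.mem_iUnion₂.mpr ⟨X ω, hω, rfl⟩

theorem ProbabilityTheory.iIndepFun.iIndepSet_preimage {ι β : Type*} [MeasurableSpace β]
    {f : ι → Ω → β} (hf : iIndepFun f μ) (hfm : ∀ i, Measurable (f i)) {S : ι → Set β}
    (hS : ∀ i, MeasurableSet (S i)) : iIndepSet (fun i => f i ⁻¹' S i) μ :=
  (iIndepSet_iff_meas_biInter fun i => hfm i (hS i)).mpr fun s =>
    hf.measure_inter_preimage_eq_mul s fun i _ => hS i

theorem ProbabilityTheory.iIndepSet.biInter_of_pairwise_disjoint {ι κ : Type*} {A : ι → Set Ω}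
    (hA : ∀ i, MeasurableSet (A i)) (h : iIndepSet A μ) {blk : κ → Finset ι}
    (hblk : Pairwise (Disjoint on blk)) : iIndepSet (fun k => ⋂ i ∈ blk k, A i) μ := by
  classical
  rw [iIndepSet_iff_meas_biInter fun k => Finset.measurableSet_biInter _ fun i _ => hA i]
  intro s
  rw [← Finset.set_biInter_biUnion, h.meas_biInter, prod_biUnion (hblk.set_pairwise _)]
  exact prod_congr rfl fun k _ => (h.meas_biInter _).symm

theorem pairwise_disjoint_Ico_mul_add (L : ℕ) :
    Pairwise (Disjoint on fun k : ℕ => Ico (k * L) (k * L + L)) := by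
  refine (pairwise_disjoint_on _).mpr fun k k' hk => disjoint_left.mpr fun i hi hi' => ?_
  have := Nat.mul_le_mul_right L (Nat.succ_le_of_lt hk)
  rw [Nat.succ_mul] at this
  simp only [mem_Ico] at hi hi'
  omega

theorem ae_exists_run_of_iIndepSet {A : ℕ → Set Ω} (hA : ∀ i, MeasurableSet (A i))
    (hind : iIndepSet A μ) {p : ℝ≥0∞} (hp0 : p ≠ 0) (hp : ∀ i, p ≤ μ (A i)) :
    ∀ᵐ ω ∂μ, ∀ L, ∃ a, ∀ j < L, ω ∈ A (a + j) := by
  have := hind.isProbabilityMeasure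
  refine ae_all_iff.mpr fun L => ?_
  set B : ℕ → Set Ω := fun k => ⋂ i ∈ Ico (k * L) (k * L + L), A i
  have hB : ∀ k, MeasurableSet (B k) := fun k => Finset.measurableSet_biInter _ fun i _ => hA i
  have hsum : ∑' k, μ (B k) = ∞ := by
    refine top_le_iff.mp ((ENNReal.tsum_const_eq_top_of_ne_zero (pow_ne_zero L hp0)).ge.trans
      (ENNReal.tsum_le_tsum fun k => ?_))
    calc p ^ L = p ^ #(Ico (k * L) (k * L + L)) := by rw [Nat.card_Ico, Nat.add_sub_cancel_left]
      _ ≤ ∏ i ∈ Ico (k * L) (k * L + L), μ (A i) := pow_card_le_prod _ _ _ fun i _ => hp i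
      _ = μ (B k) := (hind.meas_biInter _).symm
  have hlimsup := measure_limsup_eq_one hB
    (hind.biInter_of_pairwise_disjoint hA (pairwise_disjoint_Ico_mul_add L)) hsum
  have hae : ∀ᵐ ω ∂μ, ω ∈ limsup B atTop :=
    ae_iff.mpr ((prob_compl_eq_zero_iff (MeasurableSet.measurableSet_limsup hB)).mpr hlimsup)
  filter_upwards [hae] with ω hω
  obtain ⟨k, hk⟩ := (mem_limsup_iff_frequently_mem.mp hω).exists
  exact ⟨k * L, fun j hj => Set.mem_iInter₂.mp hk _ (mem_Ico.mpr ⟨by omega, by omega⟩)⟩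

theorem lintegral_natCast_lt_of_ae_le_of_ae_lt_on [IsFiniteMeasure μ] {f g : Ω → ℕ} {C : ℕ}
    (hfC : ∀ ω, f ω ≤ C) {E : Set Ω} (hE : MeasurableSet E) (hμE : μ E ≠ 0)
    (hle : ∀ᵐ ω ∂μ, f ω ≤ g ω) (hlt : ∀ᵐ ω ∂μ, ω ∈ E → f ω < g ω) :
    ∫⁻ ω, (f ω : ℝ≥0∞) ∂μ < ∫⁻ ω, (g ω : ℝ≥0∞) ∂μ := by
  have hfi : ∫⁻ ω, (f ω : ℝ≥0∞) ∂μ ≠ ∞ := by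
    refine ((lintegral_mono fun ω => Nat.cast_le.mpr (hfC ω)).trans_lt ?_).ne
    rw [lintegral_const]
    exact ENNReal.mul_lt_top (ENNReal.natCast_lt_top C) (measure_lt_top μ _)
  have hpt : ∀ᵐ ω ∂μ, (f ω : ℝ≥0∞) + E.indicator 1 ω ≤ g ω := by
    filter_upwards [hle, hlt] with ω hle hlt
    by_cases hω : ω ∈ E
    · rw [Set.indicator_of_mem hω, Pi.one_apply]
      exact_mod_cast Nat.succ_le_of_lt (hlt hω)
    · rw [Set.indicator_of_notMem hω, add_zero]
      exact_mod_cast hle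
  calc ∫⁻ ω, (f ω : ℝ≥0∞) ∂μ < ∫⁻ ω, (f ω : ℝ≥0∞) ∂μ + μ E := ENNReal.lt_add_right hfi hμE
    _ = ∫⁻ ω, (f ω : ℝ≥0∞) ∂μ + ∫⁻ ω, E.indicator 1 ω ∂μ := by rw [lintegral_indicator_one hE]
    _ ≤ ∫⁻ ω, ((f ω : ℝ≥0∞) + E.indicator 1 ω) ∂μ := le_lintegral_add _ _
    _ ≤ ∫⁻ ω, (g ω : ℝ≥0∞) ∂μ := lintegral_mono_ae hpt

end Probability

/-- **Failure of the additive-perturbation inequality for the simple symmetric random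
walk on `ℤ`.**  `Z n = ξ 0 + ⋯ + ξ (n-1)` with `ξ` i.i.d. uniform on `{-1, +1}`, and
`φ n = 0` for even `n`, `φ n = 1` for odd `n`.  Then almost surely
`|R_n(Z - φ)| / |R_n(Z)| → 1/2` as `n → ∞`, and consequently the inequality
`E[|R_n(Z - φ)|] ≥ E[|R_n(Z)|]` fails (with a strict reverse inequality) for all
sufficiently large `n`. -/
theorem additive_perturbation_fails_srw
    {Ω : Type*} [MeasurableSpace Ω] (μ : Measure Ω) [IsProbabilityMeasure μ]
    (ξ : ℕ → Ω → ℤ)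
    (hmeas : ∀ i, Measurable (ξ i))
    (hindep : iIndepFun ξ μ)
    (hlaw : ∀ i (k : ℤ), μ {ω | ξ i ω = k} = if k = 1 ∨ k = -1 then 2⁻¹ else 0)
    (Z : ℕ → Ω → ℤ)
    (hZ : ∀ n ω, Z n ω = ∑ i ∈ Finset.range n, ξ i ω)
    (φ : ℕ → ℤ)
    (hφ : ∀ n, φ n = if Even n then 0 else 1) :
    (∀ᵐ ω ∂μ, Tendsto
      (fun n : ℕ =>
        ((((Finset.range (n + 1)).image fun i => Z i ω - φ i).card : ℝ) /
          (((Finset.range (n + 1)).image fun i => Z i ω).card : ℝ)))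
      atTop (nhds (1 / 2))) ∧
    ∃ N : ℕ, ∀ n ≥ N,
      ∫⁻ ω, (((Finset.range (n + 1)).image fun i => Z i ω - φ i).card : ℝ≥0∞) ∂μ <
        ∫⁻ ω, (((Finset.range (n + 1)).image fun i => Z i ω).card : ℝ≥0∞) ∂μ := by
  obtain rfl : φ = oddIndicator := funext hφ
  have h0 : ∀ ω, Z 0 ω = 0 := fun ω => by rw [hZ, sum_range_zero]
  have hinc : ∀ ω i, Z (i + 1) ω - Z i ω = ξ i ω := fun ω i => by
    rw [hZ, hZ, sum_range_succ, add_sub_cancel_left]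
  have hup : ∀ i, μ (ξ i ⁻¹' {1}) = 2⁻¹ := fun i => (hlaw i 1).trans (if_pos (Or.inl rfl))
  have hunit : ∀ᵐ ω ∂μ, ∀ i, |Z (i + 1) ω - Z i ω| = 1 := ae_all_iff.mpr fun i =>
    (ae_of_forall_measure_eq_zero fun k hk => (hlaw i k).trans (if_neg hk)).mono
      fun ω hω => by rcases hω with h | h <;> simp [hinc, h]
  refine ⟨?_, 2, fun n hn => ?_⟩
  · have hruns := ae_exists_run_of_iIndepSet (fun i => hmeas i (measurableSet_singleton 1))
      (hindep.iIndepSet_preimage hmeas fun _ => measurableSet_singleton 1)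
      (by norm_num) fun i => (hup i).ge
    filter_upwards [hunit, hruns] with ω hω hrun
    have hbounds := card_pathRange_sub_oddIndicator_bounds (z := fun i => Z i ω) (h0 ω) hω
    exact tendsto_div_of_le_two_mul_le_add_two
      (tendsto_card_pathRange_atTop (fun i => (hω i).le)
        fun L => (hrun L).imp fun a ha j hj => (hinc ω _).trans (ha j hj))
      (fun n => (hbounds n).1) fun n => (hbounds n).2
  · have hE : μ (ξ 0 ⁻¹' {1} ∩ ξ 1 ⁻¹' {1}) = 2⁻¹ * 2⁻¹ := by
      rw [(hindep.indepFun zero_ne_one).measure_inter_preimage_eq_mul _ _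
        (measurableSet_singleton 1) (measurableSet_singleton 1), hup, hup]
    refine lintegral_natCast_lt_of_ae_le_of_ae_lt_on (fun ω => card_pathRange_le (fun i => Z i ω - oddIndicator i) n)
      ((hmeas 0 (measurableSet_singleton 1)).inter (hmeas 1 (measurableSet_singleton 1)))
      (by rw [hE]; norm_num) ?_ ?_
    · filter_upwards [hunit] with ω hω
      exact card_pathRange_sub_oddIndicator_le (h0 ω) hω (by omega)
    · filter_upwards [hunit] with ω hω ⟨h0', h1'⟩
      refine card_pathRange_sub_oddIndicator_lt (h0 ω) hω ?_ hn
      rw [hZ, sum_range_succ, sum_range_one, Set.mem_preimage.mp h0', Set.mem_preimage.mp h1']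
      rfl
end
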